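/- arXiv:1408.1973 — 6 statements merged into one kernel-verified Lean document; each statement's English description precedes it below -/
import Mathlib

section
/- For every Borel graph G = (V, 𝓑, E) of finite maximum degree and every k ∈ ℕ, there exist m ∈ ℕ and a Borel function ℓ : V → {1, …, m} such that each fiber ℓ^{-1}(i) is k-sparse. -/
open MeasureTheory Set
open scoped ENNReal

namespace CLP

universe u

variable {V : Type u}

/-- The set of neighbours of `x` in the (symmetric) edge set `E ⊆ V × V`. -/
def nbrs (E : Set (V × V)) (x : V) : Set V := {y | (x, y) ∈ E}

/-- The number of edges from `x` into the set `Y`. -/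
noncomputable def degIn (E : Set (V × V)) (Y : Set V) (x : V) : ℕ := (nbrs E x ∩ Y).ncard

/-- The edge set is symmetric. -/
def IsSymm (E : Set (V × V)) : Prop := ∀ x y : V, (x, y) ∈ E → (y, x) ∈ E

/-- The edge set is irreflexive (no loops). -/
def Irrefl (E : Set (V × V)) : Prop := ∀ x : V, (x, x) ∉ E

/-- Every vertex has finitely many neighbours, at most `d` of them. -/
def MaxDegLE (E : Set (V × V)) (d : ℕ) : Prop :=
  ∀ x : V, (nbrs E x).Finite ∧ (nbrs E x).ncard ≤ d

/-- A matching: a symmetric set of pairwise disjoint edges. -/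
def IsMatching (M : Set (V × V)) : Prop :=
  IsSymm M ∧ ∀ x y z : V, (x, y) ∈ M → (x, z) ∈ M → y = z

/-- The set of vertices covered by at least one edge of `M`. -/
def coveredVerts (M : Set (V × V)) : Set V := {x | ∃ y, (x, y) ∈ M}

/-- `WalkLen E n x y`: there is a walk of length exactly `n` from `x` to `y` in `E`. -/
def WalkLen (E : Set (V × V)) : ℕ → V → V → Prop
  | 0, x, y => x = y
  | n + 1, x, y => ∃ z, (x, z) ∈ E ∧ WalkLen E n z y

/-- Graph distance between `x` and `y` is at most `r`. -/
def DistLE (E : Set (V × V)) (r : ℕ) (x y : V) : Prop := ∃ n ≤ r, WalkLen E n x y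

/-- `x` and `y` lie in the same connectivity component. -/
def Reach (E : Set (V × V)) (x y : V) : Prop := ∃ n, WalkLen E n x y

/-- The connectivity component of `x`. -/
def component (E : Set (V × V)) (x : V) : Set V := {y | Reach E x y}

/-- A set `X` of vertices is `r`-sparse: distinct vertices of `X` are at distance `> r`. -/
def RSparse (E : Set (V × V)) (r : ℕ) (X : Set V) : Prop :=
  ∀ x ∈ X, ∀ y ∈ X, x ≠ y → ¬ DistLE E r x y

/-- A set `Q` of vertices is `r`-dense: every vertex is at distance at most `r` from `Q`. -/
def RDense (E : Set (V × V)) (r : ℕ) (Q : Set V) : Prop :=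
  ∀ x : V, ∃ y ∈ Q, DistLE E r x y

/-- The graph has no odd cycles, i.e. no closed walk of odd length. -/
def NoOddCycles (E : Set (V × V)) : Prop :=
  ∀ (n : ℕ) (x : V), ¬ WalkLen E (2 * n + 1) x x

/-- An invertible Borel bijection between Borel subsets of `V` preserving the measure `μ`. -/
structure PartialMPB [MeasurableSpace V] (μ : Measure V) where
  Dom : Set V
  Ran : Set V
  measDom : MeasurableSet Dom
  measRan : MeasurableSet Ran
  toFun : V → V
  invFun : V → V
  meas_toFun : Measurable toFun
  meas_invFun : Measurable invFun
  mapsTo : MapsTo toFun Dom Ran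
  mapsTo_inv : MapsTo invFun Ran Dom
  left_inv : ∀ x ∈ Dom, invFun (toFun x) = x
  right_inv : ∀ y ∈ Ran, toFun (invFun y) = y
  measure_preserving : ∀ S ⊆ Dom, MeasurableSet S → μ (toFun '' S) = μ S

/-- The maps `φ i` generate the edge set `E`:
`{x, y} ∈ E` iff `x ≠ y` and some `φ i` maps `x` to `y` or `y` to `x`. -/
def Generates [MeasurableSpace V] {μ : Measure V} {k : ℕ}
    (φ : Fin k → PartialMPB μ) (E : Set (V × V)) : Prop :=
  ∀ x y : V, (x, y) ∈ E ↔ x ≠ y ∧ ∃ i : Fin k,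
    (x ∈ (φ i).Dom ∧ (φ i).toFun x = y) ∨ (y ∈ (φ i).Dom ∧ (φ i).toFun y = x)

/-- A graphing (measure-preserving graph) on the measurable space `V`. -/
structure Graphing (V : Type u) [MeasurableSpace V] where
  μ : Measure V
  prob : IsProbabilityMeasure μ
  E : Set (V × V)
  measE : MeasurableSet E
  symm : IsSymm E
  irrefl : Irrefl E
  bddDeg : ∃ d : ℕ, MaxDegLE E d
  gen : ∃ (k : ℕ) (φ : Fin k → PartialMPB μ), Generates φ E

/-- The measurable chromatic index of `(E, μ)` is at most `c`: there is a Borel partition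
`E = E₀ ∪ E₁ ∪ ⋯ ∪ E_c` where `E₁, …, E_c` are matchings and the set of vertices covered
by `E₀` is `μ`-null. -/
def ChromIndexLE [MeasurableSpace V] (μ : Measure V) (E : Set (V × V)) (c : ℕ) : Prop :=
  ∃ F : Fin (c + 1) → Set (V × V),
    (∀ i, MeasurableSet (F i)) ∧
    (∀ i, IsSymm (F i)) ∧
    (⋃ i, F i) = E ∧
    (∀ i j, i ≠ j → Disjoint (F i) (F j)) ∧
    (∀ i, i ≠ 0 → IsMatching (F i)) ∧
    μ (coveredVerts (F 0)) = 0

/-! ### Finite graphs, edge colorings and the function `f` -/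

/-- A proper edge coloring of the (symmetric) edge set `E`: it is symmetric on `E` and
adjacent edges receive distinct colors. -/
def ProperEdgeColoring (E : Set (V × V)) (c : V × V → ℕ) : Prop :=
  (∀ x y : V, (x, y) ∈ E → c (x, y) = c (y, x)) ∧
  (∀ x y z : V, (x, y) ∈ E → (x, z) ∈ E → y ≠ z → c (x, y) ≠ c (x, z))

/-- A leaf: an edge one of whose endpoints has degree 1. -/
def IsLeafEdge (E : Set (V × V)) (q : V × V) : Prop :=
  q ∈ E ∧ ((nbrs E q.1).ncard = 1 ∨ (nbrs E q.2).ncard = 1)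

/-- The extension property behind the definition of `f`: in every finite graph
with all degrees at most `d` except at most one vertex of degree `d + 1`, every proper
pre-coloring of at most `d - 1` leaves (counted as `2 * (d - 1)` ordered pairs) extends to a
proper edge coloring of the whole graph using at most `d + fv` colors. -/
def PreColorExt (d fv : ℕ) : Prop :=
  ∀ (W : Type) (E : Set (W × W)), Finite W → IsSymm E → Irrefl E →
    MaxDegLE E (d + 1) →
    (∀ x y : W, d < (nbrs E x).ncard → d < (nbrs E y).ncard → x = y) →
    ∀ (L : Set (W × W)) (p : W × W → ℕ),
      L ⊆ E → IsSymm L → (∀ q ∈ L, IsLeafEdge E q) → L.ncard ≤ 2 * (d - 1) →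
      ProperEdgeColoring L p →
      ∃ c : W × W → ℕ, ProperEdgeColoring E c ∧ (∀ q ∈ L, c q = p q) ∧
        (c '' E).ncard ≤ d + fv

/-- `fDef k` is the least `f` such that `PreColorExt d f` holds for all `1 ≤ d ≤ k`. -/
noncomputable def fDef (k : ℕ) : ℕ :=
  sInf {fv : ℕ | ∀ d : ℕ, 1 ≤ d → d ≤ k → PreColorExt d fv}

/-!
The graph `powerGraph E k` joining distinct vertices at distance at most `k` is again a Borel
graph of bounded degree; its Borelness rests on the Lusin–Novikov theorem for sections of
bounded finite size, proved by peeling off the least point of every section. A `k`-sparse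
labelling is a proper colouring of this graph. Through a Borel embedding into `ℝ`, each vertex
lies in a rational interval containing none of its neighbours, which gives a countable Borel
proper colouring; first-fit recolouring along it uses at most `D + 1` colours and stays Borel.
-/

theorem measurableSet_image_fst_of_encard_le {X Y : Type u} [MeasurableSpace X]
    [StandardBorelSpace X] [MeasurableSpace Y] [StandardBorelSpace Y] (n : ℕ)
    {R : Set (X × Y)} (hR : MeasurableSet R) (hn : ∀ x, {y | (x, y) ∈ R}.encard ≤ n) :
    MeasurableSet (Prod.fst '' R) := by
  induction n generalizing X R with
  | zero =>
    have : R = ∅ := eq_empty_of_forall_notMem fun p hp => by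
      have hsec : {y | (p.1, y) ∈ R} = ∅ :=
        encard_eq_zero.1 (nonpos_iff_eq_zero.1 (by exact_mod_cast hn p.1))
      exact eq_empty_iff_forall_notMem.1 hsec p.2 hp
    simp [this]
  | succ n ih =>
    obtain ⟨e, he⟩ := exists_measurableEmbedding_real Y
    -- The section of `S` over `(x, y) ∈ R` misses `y`, so `ih` applies to `S`.
    let S : Set ((X × Y) × Y) := {q | q.1 ∈ R ∧ (q.1.1, q.2) ∈ R ∧ e q.2 < e q.1.2}
    have hS : MeasurableSet S :=
      (measurable_fst hR).inter <| ((measurable_fst.fst.prodMk measurable_snd) hR).inter <|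
        measurableSet_lt (he.measurable.comp measurable_snd) (he.measurable.comp measurable_fst.snd)
    have hSn : ∀ p : X × Y, {y | (p, y) ∈ S}.encard ≤ n := by
      rintro ⟨x, y⟩
      by_cases hxy : (x, y) ∈ R
      · have hsub : {y' | ((x, y), y') ∈ S} ⊆ {y' | (x, y') ∈ R} \ {y} :=
          fun y' hy' => ⟨hy'.2.1, fun h => (h ▸ hy'.2.2).false⟩
        have hle : ({y' | (x, y') ∈ R} \ {y}).encard + 1 ≤ n + 1 := by
          rw [encard_sdiff_singleton_add_one (s := {y' | (x, y') ∈ R}) hxy]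
          exact_mod_cast hn x
        exact (encard_le_encard hsub).trans ((WithTop.add_le_add_iff_right ENat.one_ne_top).1 hle)
      · simp [S, hxy]
    -- On the `e`-least points of the sections, `Prod.fst` is injective with the same image.
    let M := R \ Prod.fst '' S
    have hinj : InjOn Prod.fst M := by
      rintro ⟨x, y₁⟩ ⟨h₁, h₁'⟩ ⟨x', y₂⟩ ⟨h₂, h₂'⟩ (rfl : x = x')
      by_contra hne
      rcases lt_or_gt_of_ne (he.injective.ne fun h : y₁ = y₂ => hne (h ▸ rfl)) with h | h
      · exact h₂' ⟨((x, y₂), y₁), ⟨h₂, h₁, h⟩, rfl⟩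
      · exact h₁' ⟨((x, y₁), y₂), ⟨h₁, h₂, h⟩, rfl⟩
    have himage : Prod.fst '' M = Prod.fst '' R := by
      refine (image_mono sdiff_subset).antisymm ?_
      rintro x ⟨⟨x, y⟩, hxy, rfl⟩
      obtain ⟨y₀, hy₀, hmin⟩ :=
        exists_min_image _ e (finite_of_encard_le_coe (hn x)) ⟨y, hxy⟩
      refine ⟨(x, y₀), ⟨hy₀, ?_⟩, rfl⟩
      rintro ⟨⟨⟨_, _⟩, y'⟩, ⟨-, hy', hlt⟩, h⟩
      obtain ⟨rfl, rfl⟩ := Prod.mk.inj h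
      exact (hmin y' hy').not_gt hlt
    rw [← himage]
    exact (hR.diff (ih hS hSn)).image_of_measurable_injOn measurable_fst hinj

lemma maxDegLE_iff_encard_le {E : Set (V × V)} {d : ℕ} :
    MaxDegLE E d ↔ ∀ x, (nbrs E x).encard ≤ d := by
  simp only [MaxDegLE, encard_le_coe_iff_finite_ncard_le]

lemma measurableSet_exists_adj_mem [MeasurableSpace V] [StandardBorelSpace V]
    {R : Set (V × V)} {D : ℕ} (hR : MeasurableSet R) (hD : ∀ x, (nbrs R x).encard ≤ D)
    {T : Set V} (hT : MeasurableSet T) : MeasurableSet {x | ∃ y, (x, y) ∈ R ∧ y ∈ T} := by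
  have : {x | ∃ y, (x, y) ∈ R ∧ y ∈ T} = Prod.fst '' (R ∩ Prod.snd ⁻¹' T) := by
    ext x; simp
  rw [this]
  exact measurableSet_image_fst_of_encard_le D (hR.inter (measurable_snd hT))
    fun x => (encard_le_encard fun y hy => hy.1).trans (hD x)

section Greedy

variable {R : Set (V × V)} {c : V → ℕ} {D : ℕ}

noncomputable def greedy (R : Set (V × V)) (c : V → ℕ) (x : V) : ℕ :=
  sInf {i | ∀ y, (x, y) ∈ R → ∀ _ : c y < c x, greedy R c y ≠ i}
termination_by c x

lemma exists_le_greedy_free (hD : ∀ x, (nbrs R x).encard ≤ D) (x : V) :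
    ∃ i ≤ D, ∀ y, (x, y) ∈ R → c y < c x → greedy R c y ≠ i := by
  obtain ⟨hfin, hcard⟩ := encard_le_coe_iff_finite_ncard_le.1
    ((encard_image_le (greedy R c) _).trans (hD x))
  have hlt : (greedy R c '' nbrs R x).ncard < (Finset.range (D + 1) : Set ℕ).ncard := by
    rw [ncard_coe_finset, Finset.card_range]
    omega
  obtain ⟨i, hi, hfree⟩ := exists_mem_notMem_of_ncard_lt_ncard hlt hfin
  exact ⟨i, Nat.lt_succ_iff.1 (by simpa using hi), fun y hy _ h => hfree ⟨y, hy, h⟩⟩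

lemma greedy_eq_iff (hD : ∀ x, (nbrs R x).encard ≤ D) {x : V} {i : ℕ} :
    greedy R c x = i ↔ (∀ y, (x, y) ∈ R → c y < c x → greedy R c y ≠ i) ∧
      ∀ j < i, ∃ y, (x, y) ∈ R ∧ c y < c x ∧ greedy R c y = j := by
  classical
  obtain ⟨i₀, -, hi₀⟩ := exists_le_greedy_free (c := c) hD x
  have hne : {i | ∀ y, (x, y) ∈ R → c y < c x → greedy R c y ≠ i}.Nonempty := ⟨i₀, hi₀⟩
  rw [greedy, Nat.sInf_def hne]
  refine (Nat.find_eq_iff hne).trans ?_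
  simp only [mem_ofPred_eq, not_forall, not_not, exists_prop]

lemma greedy_le (hD : ∀ x, (nbrs R x).encard ≤ D) (x : V) : greedy R c x ≤ D := by
  obtain ⟨i₀, hi₀D, hi₀⟩ := exists_le_greedy_free (c := c) hD x
  rw [greedy]
  refine (Nat.sInf_le ?_).trans hi₀D
  exact hi₀

lemma greedy_ne_of_lt (hD : ∀ x, (nbrs R x).encard ≤ D) {x y : V} (hxy : (x, y) ∈ R)
    (hc : c y < c x) : greedy R c y ≠ greedy R c x :=
  ((greedy_eq_iff hD).1 rfl).1 y hxy hc

end Greedy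

section Coloring

variable [MeasurableSpace V] [StandardBorelSpace V] {R : Set (V × V)} {c : V → ℕ} {D : ℕ}

theorem exists_measurable_nat_coloring (hR : MeasurableSet R) (hirr : Irrefl R)
    (hD : ∀ x, (nbrs R x).encard ≤ D) :
    ∃ c : V → ℕ, Measurable c ∧ ∀ x y, (x, y) ∈ R → c x ≠ c y := by
  classical
  obtain ⟨e, he⟩ := exists_measurableEmbedding_real V
  obtain ⟨u, hu⟩ := exists_surjective_nat (ℚ × ℚ)
  let S : ℕ → Set V := fun n => e ⁻¹' Ioo ((u n).1 : ℝ) (u n).2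
  -- `A n` is an `R`-independent Borel set; rational intervals separate each point from its
  -- finitely many neighbours, so these sets cover `V`.
  let A : ℕ → Set V := fun n => S n \ {x | ∃ y, (x, y) ∈ R ∧ y ∈ S n}
  have hA : ∀ n, MeasurableSet (A n) := fun n =>
    (he.measurable measurableSet_Ioo).diff
      (measurableSet_exists_adj_mem hR hD (he.measurable measurableSet_Ioo))
  have hcover : ∀ x, ∃ n, x ∈ A n := by
    intro x
    have hopen : IsOpen (e '' nbrs R x)ᶜ :=
      ((finite_of_encard_le_coe (hD x)).image e).isClosed.isOpen_compl
    have hx : e x ∉ e '' nbrs R x := by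
      rintro ⟨y, hy, hyx⟩
      exact hirr x (he.injective hyx ▸ hy)
    obtain ⟨_, hv, hxv, hvsub⟩ := Real.isTopologicalBasis_Ioo_rat.exists_subset_of_mem_open hx hopen
    simp only [mem_iUnion, mem_singleton_iff] at hv
    obtain ⟨a, b, -, rfl⟩ := hv
    obtain ⟨n, hn⟩ := hu (a, b)
    have hSn : S n = e ⁻¹' Ioo (a : ℝ) b := by simp only [S, hn]
    refine ⟨n, hSn ▸ hxv, ?_⟩
    rintro ⟨y, hy, hyS⟩
    rw [hSn] at hyS
    exact hvsub hyS ⟨y, hy, rfl⟩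
  refine ⟨fun x => Nat.find (hcover x), measurable_find hcover hA, fun x y hxy hc => ?_⟩
  have hx := Nat.find_spec (hcover x)
  have hy := Nat.find_spec (hcover y)
  rw [show Nat.find (hcover x) = Nat.find (hcover y) from hc] at hx
  exact hx.2 ⟨y, hxy, hy.1⟩

lemma measurableSet_lt_and_greedy_eq (hR : MeasurableSet R) (hD : ∀ x, (nbrs R x).encard ≤ D)
    (hc : Measurable c) (n i : ℕ) : MeasurableSet {x | c x < n ∧ greedy R c x = i} := by
  induction n generalizing i with
  | zero => simp
  | succ n ih =>
    let U : ℕ → Set V := fun j => {x | ∃ y, (x, y) ∈ R ∧ y ∈ {y | c y < n ∧ greedy R c y = j}}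
    have hU : ∀ j, MeasurableSet (U j) := fun j => measurableSet_exists_adj_mem hR hD (ih j)
    have hstep : {x | c x < n + 1 ∧ greedy R c x = i} =
        {x | c x < n ∧ greedy R c x = i} ∪ (c ⁻¹' {n} ∩ (U i)ᶜ ∩ ⋂ j, ⋂ (_ : j < i), U j) := by
      ext x
      simp only [mem_ofPred_eq, mem_union, mem_inter_iff, mem_preimage, mem_singleton_iff,
        mem_compl_iff, mem_iInter, U]
      rcases lt_trichotomy (c x) n with h | rfl | h
      · simp [h, h.ne, Nat.lt_add_one_of_lt h]
      · rw [greedy_eq_iff hD]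
        simp only [lt_irrefl, lt_add_one, true_and, false_and, false_or, not_exists, not_and]
      · simp [h.not_gt, h.ne', Nat.lt_add_one_iff.not.2 h.not_ge]
    rw [hstep]
    exact (ih i).union (((hc (measurableSet_singleton n)).inter (hU i).compl).inter
      (.iInter fun j => .iInter fun _ => hU j))

lemma measurable_greedy (hR : MeasurableSet R) (hD : ∀ x, (nbrs R x).encard ≤ D)
    (hc : Measurable c) : Measurable (greedy R c) := by
  refine measurable_to_countable' fun i => ?_
  have : greedy R c ⁻¹' {i} = ⋃ n, {x | c x < n ∧ greedy R c x = i} := by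
    ext x
    simp only [mem_preimage, mem_singleton_iff, mem_iUnion, mem_ofPred_eq]
    exact ⟨fun h => ⟨c x + 1, lt_add_one _, h⟩, fun ⟨_, _, h⟩ => h⟩
  rw [this]
  exact .iUnion fun n => measurableSet_lt_and_greedy_eq hR hD hc n i

theorem exists_measurable_fin_coloring (hR : MeasurableSet R) (hsymm : IsSymm R)
    (hirr : Irrefl R) (hD : ∀ x, (nbrs R x).encard ≤ D) :
    ∃ ℓ : V → Fin (D + 1), Measurable ℓ ∧ ∀ x y, (x, y) ∈ R → ℓ x ≠ ℓ y := by
  obtain ⟨c, hc, hproper⟩ := exists_measurable_nat_coloring hR hirr hD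
  refine ⟨fun x => Fin.ofNat (D + 1) (greedy R c x),
    (measurable_from_nat (f := Fin.ofNat (D + 1))).comp (measurable_greedy hR hD hc),
    fun x y hxy hxy' => ?_⟩
  have hval : ∀ z, (Fin.ofNat (D + 1) (greedy R c z) : ℕ) = greedy R c z :=
    fun z => Nat.mod_eq_of_lt (Nat.lt_add_one_of_le (greedy_le hD z))
  replace hxy' : greedy R c x = greedy R c y := by
    rw [← hval x, ← hval y]
    exact congrArg Fin.val hxy'
  rcases (hproper x y hxy).lt_or_gt with hlt | hlt
  · exact greedy_ne_of_lt hD (hsymm x y hxy) hlt hxy'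
  · exact greedy_ne_of_lt hD hxy hlt hxy'.symm

end Coloring

lemma encard_biUnion_le_mul {ι α : Type*} {t : Set ι} {s : ι → Set α} {a b : ℕ}
    (ht : t.encard ≤ a) (hs : ∀ i ∈ t, (s i).encard ≤ b) : (⋃ i ∈ t, s i).encard ≤ a * b := by
  have hfin := finite_of_encard_le_coe ht
  calc (⋃ i ∈ t, s i).encard ≤ ∑ i ∈ hfin.toFinset, (s i).encard := by
        simpa using hfin.toFinset.set_encard_biUnion_le s
    _ ≤ hfin.toFinset.card • (b : ℕ∞) :=
        Finset.sum_le_card_nsmul _ _ _ fun i hi => hs i (hfin.mem_toFinset.1 hi)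
    _ ≤ a * b := by
        rw [nsmul_eq_mul, ← hfin.encard_eq_coe_toFinset_card]
        gcongr

section Distance

variable {E : Set (V × V)} {d k : ℕ} {x y : V}

lemma walkLen_succ_iff_concat {n : ℕ} :
    WalkLen E (n + 1) x y ↔ ∃ z, WalkLen E n x z ∧ (z, y) ∈ E := by
  induction n generalizing x with
  | zero => exact ⟨fun ⟨z, hz, hzy⟩ => ⟨x, rfl, hzy ▸ hz⟩, fun ⟨z, hxz, hz⟩ => ⟨y, hxz ▸ hz, rfl⟩⟩
  | succ n ih =>
    constructor
    · rintro ⟨z, hz, hw⟩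
      obtain ⟨w, hw₁, hw₂⟩ := ih.1 hw
      exact ⟨w, ⟨z, hz, hw₁⟩, hw₂⟩
    · rintro ⟨z, ⟨w, hw₁, hw₂⟩, hz⟩
      exact ⟨w, hw₁, ih.2 ⟨z, hw₂, hz⟩⟩

lemma WalkLen.symm (hsymm : IsSymm E) {n : ℕ} (h : WalkLen E n x y) : WalkLen E n y x := by
  induction n generalizing x with
  | zero => exact h.symm
  | succ n ih =>
    obtain ⟨z, hz, hw⟩ := h
    exact walkLen_succ_iff_concat.2 ⟨z, ih hw, hsymm _ _ hz⟩

lemma DistLE.symm (hsymm : IsSymm E) (h : DistLE E k x y) : DistLE E k y x :=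
  let ⟨n, hn, hw⟩ := h
  ⟨n, hn, hw.symm hsymm⟩

lemma distLE_zero_iff : DistLE E 0 x y ↔ x = y :=
  ⟨fun ⟨_, hn, hw⟩ => by rwa [Nat.le_zero.1 hn] at hw, fun h => ⟨0, le_rfl, h⟩⟩

lemma distLE_succ_iff : DistLE E (k + 1) x y ↔ x = y ∨ ∃ z, (x, z) ∈ E ∧ DistLE E k z y := by
  constructor
  · rintro ⟨_ | n, hn, hw⟩
    · exact .inl hw
    · obtain ⟨z, hz, hw⟩ := hw
      exact .inr ⟨z, hz, n, by omega, hw⟩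
  · rintro (rfl | ⟨z, hz, n, hn, hw⟩)
    · exact ⟨0, (k + 1).zero_le, rfl⟩
    · exact ⟨n + 1, by omega, z, hz, hw⟩

lemma encard_setOf_distLE_le (hd : ∀ x, (nbrs E x).encard ≤ d) (k : ℕ) (x : V) :
    {y | DistLE E k x y}.encard ≤ ((d + 1) ^ k : ℕ) := by
  induction k generalizing x with
  | zero => simp [distLE_zero_iff]
  | succ k ih =>
    have hball : {y | DistLE E (k + 1) x y} = insert x (⋃ z ∈ nbrs E x, {y | DistLE E k z y}) := by
      ext y
      simp [distLE_succ_iff, eq_comm, nbrs]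
    have hpow : d * (d + 1) ^ k + 1 ≤ (d + 1) ^ (k + 1) := by
      rw [pow_succ]
      nlinarith [Nat.one_le_pow k (d + 1) d.succ_pos]
    calc {y | DistLE E (k + 1) x y}.encard
        ≤ (⋃ z ∈ nbrs E x, {y | DistLE E k z y}).encard + 1 := by
          rw [hball]; exact encard_insert_le _ _
      _ ≤ d * (d + 1) ^ k + 1 := by
          gcongr
          exact_mod_cast encard_biUnion_le_mul (hd x) fun z _ => ih z
      _ ≤ ((d + 1) ^ (k + 1) : ℕ) := by exact_mod_cast hpow

lemma measurableSet_distLE [MeasurableSpace V] [StandardBorelSpace V] (hE : MeasurableSet E)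
    (hd : ∀ x, (nbrs E x).encard ≤ d) (k : ℕ) :
    MeasurableSet {p : V × V | DistLE E k p.1 p.2} := by
  induction k with
  | zero =>
    have : {p : V × V | DistLE E 0 p.1 p.2} = diagonal V := by ext; exact distLE_zero_iff
    exact this ▸ measurableSet_diagonal
  | succ k ih =>
    have : {p : V × V | DistLE E (k + 1) p.1 p.2} = diagonal V ∪
        Prod.fst '' {q : (V × V) × V | (q.1.1, q.2) ∈ E ∧ DistLE E k q.2 q.1.2} := by
      ext ⟨x, y⟩
      simp [distLE_succ_iff]
    rw [this]
    refine measurableSet_diagonal.union (measurableSet_image_fst_of_encard_le d ?_ fun p => ?_)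
    · exact ((measurable_fst.fst.prodMk measurable_snd) hE).inter
        ((measurable_snd.prodMk measurable_fst.snd) ih)
    · exact (encard_le_encard fun z hz => hz.1).trans (hd p.1)

def powerGraph (E : Set (V × V)) (k : ℕ) : Set (V × V) := {p | p.1 ≠ p.2 ∧ DistLE E k p.1 p.2}

lemma isSymm_powerGraph (hsymm : IsSymm E) (k : ℕ) : IsSymm (powerGraph E k) :=
  fun _ _ ⟨hne, h⟩ => ⟨hne.symm, h.symm hsymm⟩

lemma irrefl_powerGraph (E : Set (V × V)) (k : ℕ) : Irrefl (powerGraph E k) :=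
  fun _ h => h.1 rfl

lemma encard_nbrs_powerGraph_le (hd : ∀ x, (nbrs E x).encard ≤ d) (k : ℕ) (x : V) :
    (nbrs (powerGraph E k) x).encard ≤ ((d + 1) ^ k : ℕ) :=
  (encard_le_encard fun _ hy => hy.2).trans (encard_setOf_distLE_le hd k x)

lemma measurableSet_powerGraph [MeasurableSpace V] [StandardBorelSpace V] (hE : MeasurableSet E)
    (hd : ∀ x, (nbrs E x).encard ≤ d) (k : ℕ) : MeasurableSet (powerGraph E k) :=
  (measurableSet_diagonal.compl).inter (measurableSet_distLE hE hd k)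

end Distance

theorem exists_sparse_labeling_general {V : Type u} [MeasurableSpace V] [StandardBorelSpace V]
    (E : Set (V × V)) (hmeas : MeasurableSet E) (hsymm : IsSymm E)
    (hdeg : ∃ d : ℕ, MaxDegLE E d) (k : ℕ) :
    ∃ (m : ℕ) (ℓ : V → Fin m), Measurable ℓ ∧ ∀ i : Fin m, RSparse E k (ℓ ⁻¹' {i}) := by
  obtain ⟨d, hd⟩ := hdeg
  rw [maxDegLE_iff_encard_le] at hd
  obtain ⟨ℓ, hℓ, hproper⟩ := exists_measurable_fin_coloring (measurableSet_powerGraph hmeas hd k)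
    (isSymm_powerGraph hsymm k) (irrefl_powerGraph E k) (encard_nbrs_powerGraph_le hd k)
  exact ⟨_, ℓ, hℓ, fun i x hx y hy hne hxy => hproper x y ⟨hne, hxy⟩ (hx.trans hy.symm)⟩

/-- Every Borel graph of finite maximum degree admits, for every `k`, a
Borel labeling `ℓ : V → Fin m` all of whose fibers are `k`-sparse. -/
theorem exists_sparse_labeling {V : Type u} [MeasurableSpace V] [StandardBorelSpace V]
    (E : Set (V × V)) (hmeas : MeasurableSet E) (hsymm : IsSymm E) (hirr : Irrefl E)
    (hdeg : ∃ d : ℕ, MaxDegLE E d) (k : ℕ) :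
    ∃ (m : ℕ) (ℓ : V → Fin m), Measurable ℓ ∧ ∀ i : Fin m, RSparse E k (ℓ ⁻¹' {i}) :=
  exists_sparse_labeling_general E hmeas hsymm hdeg k

end CLP
end

section
/- Let G be a graph with a matching M. Let p be an even alternating path from a vertex x to a vertex y, and let q be an odd weakly-alternating path from y to a vertex z. Then there is an odd alternating path from x to either y or z whose length is at most |p| + |q|. -/
/-!
Walk along `p` from `x` up to its first vertex `p i` that lies on `q`, say `p i = q j`. If
`i + j` is even, continue along `q` forward to `z`; if it is odd, go back along `q` to `y`.
The parity of `i + j` is exactly what makes the edges alternate at the junction, the minimality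
of `i` keeps the result a path, and its length `i + (|q| - j)`, resp. `i + j`, is odd because
`|q|` is odd, resp. because `i + j` is.
-/

open MeasureTheory Set
open scoped ENNReal

namespace CLP

universe u

variable {V : Type u}

/-- The consecutive pairs of the list `l` are edges of `E`, which alternately avoid and
belong to the matching `M`, starting with an edge not in `M`. -/
def AltEdges (E M : Set (V × V)) (l : List V) : Prop :=
  ∀ (i : ℕ) (h : i + 1 < l.length),
    (l.get ⟨i, by omega⟩, l.get ⟨i + 1, h⟩) ∈ E ∧
    (Even i ↔ (l.get ⟨i, by omega⟩, l.get ⟨i + 1, h⟩) ∉ M)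

/-- A weakly-alternating path of length `n` from `x` to `y`: a self-avoiding walk whose
edges alternately lie outside `M` and in `M`, starting with an edge not in `M`. -/
def WeakAltPath (E M : Set (V × V)) (x y : V) (n : ℕ) : Prop :=
  ∃ l : List V, l.length = n + 1 ∧ l.Nodup ∧ l.head? = some x ∧ l.getLast? = some y ∧
    AltEdges E M l

/-- An alternating path: a weakly-alternating path whose first vertex is not covered
by the matching. -/
def AltPath (E M : Set (V × V)) (x y : V) (n : ℕ) : Prop :=
  WeakAltPath E M x y n ∧ x ∉ coveredVerts M

section AltWalk

variable (E M : Set (V × V))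

/-- `f 0, f 1, …, f n` is a walk in `E` whose `k`-th edge lies outside `M` iff `k + s` is even. -/
def IsAltWalk (s : ℕ) (f : ℕ → V) (n : ℕ) : Prop :=
  ∀ k < n, (f k, f (k + 1)) ∈ E ∧ (Even (k + s) ↔ (f k, f (k + 1)) ∉ M)

theorem weakAltPath_iff_exists_fun {x y : V} {n : ℕ} :
    WeakAltPath E M x y n ↔ ∃ f : ℕ → V, f 0 = x ∧ f n = y ∧ InjOn f (Iic n) ∧
      IsAltWalk E M 0 f n := by
  constructor
  · rintro ⟨l, hlen, hnd, hhd, hlast, halt⟩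
    have hlt {i : ℕ} (hi : i ∈ Iic n) : i < l.length := by simp only [mem_Iic] at hi; omega
    refine ⟨fun i => l.getD i x, ?_, ?_, ?_, fun k hk => ?_⟩
    · simp_all [List.getD_eq_getElem?_getD, List.head?_eq_getElem?]
    · simp_all [List.getD_eq_getElem?_getD, List.getLast?_eq_getElem?]
    · intro i hi j hj hij
      simp only [List.getD_eq_getElem _ _ (hlt hi), List.getD_eq_getElem _ _ (hlt hj)] at hij
      exact (List.Nodup.getElem_inj_iff hnd).mp hij
    · simpa [List.getElem?_eq_getElem (show k < l.length by omega),
        List.getElem?_eq_getElem (show k + 1 < l.length by omega)] using halt k (by omega)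
  · rintro ⟨f, h0, hn, hinj, he⟩
    refine ⟨(List.range (n + 1)).map f, by simp, ?_, ?_, ?_, fun k hk => ?_⟩
    · exact List.Nodup.map_on (fun a ha b hb => hinj (by simpa [Nat.lt_succ_iff] using ha)
        (by simpa [Nat.lt_succ_iff] using hb)) List.nodup_range
    · simp [List.head?_range, h0]
    · simp [List.getLast?_range, hn]
    · simp only [List.length_map, List.length_range] at hk
      simpa using he k (by omega)

variable {E M} {s n : ℕ} {f : ℕ → V}

namespace IsAltWalk

theorem mono {m : ℕ} (h : IsAltWalk E M s f n) (hm : m ≤ n) : IsAltWalk E M s f m :=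
  fun k hk => h k (by omega)

theorem of_even_iff {t : ℕ} (h : IsAltWalk E M s f n) (hst : Even s ↔ Even t) :
    IsAltWalk E M t f n :=
  fun k hk => ⟨(h k hk).1, by rw [← (h k hk).2, Nat.even_add, Nat.even_add, hst]⟩

theorem shift (h : IsAltWalk E M s f n) (j : ℕ) :
    IsAltWalk E M (s + j) (fun k => f (j + k)) (n - j) := fun k hk => by
  obtain ⟨hmem, hpar⟩ := h (j + k) (by omega)
  exact ⟨hmem, by rwa [show k + (s + j) = j + k + s by omega]⟩

theorem reverse (hE : IsSymm E) (hM : IsSymm M) (h : IsAltWalk E M s f n) :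
    IsAltWalk E M (s + n + 1) (fun k => f (n - k)) n := fun k hk => by
  obtain ⟨hmem, hpar⟩ := h (n - (k + 1)) (by omega)
  rw [show n - (k + 1) + 1 = n - k by omega] at hmem hpar
  have hst : Even (k + (s + n + 1)) ↔ Even (n - (k + 1) + s) := by
    simp only [Nat.even_iff]; omega
  rw [hst, hpar, not_iff_not]
  exact ⟨hE _ _ hmem, ⟨hM _ _, hM _ _⟩⟩

end IsAltWalk

theorem injOn_shift {j : ℕ} (h : InjOn f (Iic n)) (hj : j ≤ n) :
    InjOn (fun k => f (j + k)) (Iic (n - j)) := by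
  intro a ha b hb hab
  simp only [mem_Iic] at ha hb
  have := h (by simp only [mem_Iic]; omega) (by simp only [mem_Iic]; omega) hab
  omega

theorem injOn_reverse (h : InjOn f (Iic n)) : InjOn (fun k => f (n - k)) (Iic n) := by
  intro a ha b hb hab
  simp only [mem_Iic] at ha hb
  have := h (by simp only [mem_Iic]; omega) (by simp only [mem_Iic]; omega) hab
  omega

def splice (f : ℕ → V) (i : ℕ) (g : ℕ → V) (k : ℕ) : V := if k < i then f k else g (k - i)

section splice

variable {i m k : ℕ} {g : ℕ → V}

theorem splice_of_le (hfg : f i = g 0) (hk : k ≤ i) : splice f i g k = f k := by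
  unfold splice
  split_ifs with h
  · rfl
  · rw [show k = i by omega, Nat.sub_self, hfg]

theorem splice_of_ge (hk : i ≤ k) : splice f i g k = g (k - i) :=
  if_neg (by omega)

theorem IsAltWalk.splice (hf : IsAltWalk E M s f i) (hg : IsAltWalk E M (s + i) g m)
    (hfg : f i = g 0) : IsAltWalk E M s (splice f i g) (i + m) := fun k hk => by
  rcases lt_or_ge k i with hki | hik
  · rw [splice_of_le hfg hki.le, splice_of_le hfg hki]
    exact hf k hki
  · rw [splice_of_ge hik, splice_of_ge (by omega : i ≤ k + 1), Nat.sub_add_comm hik]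
    obtain ⟨hmem, hpar⟩ := hg (k - i) (by omega)
    exact ⟨hmem, by rwa [show k - i + (s + i) = k + s by omega] at hpar⟩

theorem injOn_splice (hf : InjOn f (Iio i)) (hg : InjOn g (Iic m))
    (hfg : ∀ a < i, ∀ b ≤ m, f a ≠ g b) : InjOn (splice f i g) (Iic (i + m)) := by
  intro a ha b hb hab
  simp only [mem_Iic] at ha hb
  unfold splice at hab
  split_ifs at hab with hai hbi hbi
  · exact hf hai hbi hab
  · exact absurd hab (hfg a hai (b - i) (by omega))
  · exact absurd hab.symm (hfg b hbi (a - i) (by omega))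
  · have := hg (by simp only [mem_Iic]; omega) (by simp only [mem_Iic]; omega) hab
    omega

theorem weakAltPath_splice (hf : IsAltWalk E M 0 f i) (hfinj : InjOn f (Iio i))
    (hg : IsAltWalk E M i g m) (hginj : InjOn g (Iic m)) (hfg : f i = g 0)
    (hdisj : ∀ a < i, ∀ b ≤ m, f a ≠ g b) : WeakAltPath E M (f 0) (g m) (i + m) := by
  refine (weakAltPath_iff_exists_fun E M).2 ⟨splice f i g, splice_of_le hfg (Nat.zero_le _), ?_,
    injOn_splice hfinj hginj hdisj, hf.splice (by rwa [zero_add]) hfg⟩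
  rw [splice_of_ge (Nat.le_add_right _ _), Nat.add_sub_cancel_left]

end splice

end AltWalk

theorem odd_altPath_of_concat_general {V : Type u} (E M : Set (V × V))
    (hsymmE : IsSymm E) (hM : IsMatching M)
    (x y z : V) (np nq : ℕ) (hnq : Odd nq)
    (hp : AltPath E M x y np) (hq : WeakAltPath E M y z nq) :
    ∃ m : ℕ, Odd m ∧ m ≤ np + nq ∧ (AltPath E M x y m ∨ AltPath E M x z m) := by
  classical
  obtain ⟨hpw, hx⟩ := hp
  obtain ⟨fp, rfl, rfl, hpinj, hpalt⟩ := (weakAltPath_iff_exists_fun E M).1 hpw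
  obtain ⟨fq, hq0, rfl, hqinj, hqalt⟩ := (weakAltPath_iff_exists_fun E M).1 hq
  have hmeet : ∃ i, i ≤ np ∧ ∃ j ≤ nq, fp i = fq j := ⟨np, le_rfl, 0, Nat.zero_le _, hq0.symm⟩
  obtain ⟨hi, j, hj, hij⟩ := Nat.find_spec hmeet
  set i := Nat.find hmeet
  have hmin : ∀ a < i, ∀ b ≤ nq, fp a ≠ fq b :=
    fun a ha b hb h => Nat.find_min hmeet ha ⟨by omega, b, hb, h⟩
  have hpinj_pre : InjOn fp (Iio i) := hpinj.mono fun a ha => (le_of_lt ha).trans hi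
  rw [Nat.odd_iff] at hnq
  by_cases hpar : (i + j) % 2 = 0
  · refine ⟨i + (nq - j), Nat.odd_iff.2 (by omega), by omega, Or.inr ⟨?_, hx⟩⟩
    simpa [Nat.add_sub_cancel' hj] using weakAltPath_splice (hpalt.mono hi) hpinj_pre
      ((hqalt.shift j).of_even_iff (by simp only [Nat.even_iff]; omega)) (injOn_shift hqinj hj)
      (by simpa) (fun a ha b _ => hmin a ha (j + b) (by omega))
  · refine ⟨i + j, Nat.odd_iff.2 (by omega), by omega, Or.inl ⟨?_, hx⟩⟩
    simpa [← hq0] using weakAltPath_splice (hpalt.mono hi) hpinj_pre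
      (((hqalt.mono hj).reverse hsymmE hM.1).of_even_iff (by simp only [Nat.even_iff]; omega))
      (injOn_reverse (hqinj.mono (Iic_subset_Iic.2 hj))) (by simpa)
      (fun a ha b _ => hmin a ha (j - b) (by omega))

/-- If `p` is an even alternating path from `x` to `y` and `q` is an odd
weakly-alternating path from `y` to `z`, then there is an odd alternating path from `x` to
`y` or to `z` of length at most `|p| + |q|`. -/
theorem odd_altPath_of_concat {V : Type u} (E M : Set (V × V))
    (hsymmE : IsSymm E) (hirr : Irrefl E) (hME : M ⊆ E) (hM : IsMatching M)
    (x y z : V) (np nq : ℕ) (hnp : Even np) (hnq : Odd nq)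
    (hp : AltPath E M x y np) (hq : WeakAltPath E M y z nq) :
    ∃ m : ℕ, Odd m ∧ m ≤ np + nq ∧ (AltPath E M x y m ∨ AltPath E M x z m) :=
  odd_altPath_of_concat_general E M hsymmE hM x y z np nq hnq hp hq

end CLP
end

section
/- Let d ≥ 2 and let G be a finite graph in which every vertex has degree at most d, except at most one vertex of degree d + 1. Let Z be the set of vertices of degree at least d. Suppose that every set A ⊆ Z with |A| ≥ 2 that spans a connected subgraph has at least d edges joining A to V ∖ A. Then G has a matching covering every vertex of Z. -/
open MeasureTheory Set
open scoped ENNReal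

namespace SimpleGraph

variable {V : Type*} (G : SimpleGraph V) (Z : Set V)

def coveringGraph : SimpleGraph (V ⊕ V) where
  Adj
    | .inl a, .inl b => G.Adj a b
    | .inr a, .inr b => a ≠ b
    | .inl a, .inr _ => a ∉ Z
    | .inr _, .inl b => b ∉ Z
  symm := ⟨by rintro (a | a) (b | b) h <;> simp_all [G.adj_comm, ne_comm]⟩
  loopless := ⟨by rintro (a | a) <;> simp⟩

variable {G Z}

@[simp]
lemma coveringGraph_adj_inr_inr {a b : V} : (G.coveringGraph Z).Adj (.inr a) (.inr b) ↔ a ≠ b :=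
  Iff.rfl

@[simp]
lemma coveringGraph_adj_inl_inr {a b : V} : (G.coveringGraph Z).Adj (.inl a) (.inr b) ↔ a ∉ Z :=
  Iff.rfl

lemma exists_isMatching_of_isPerfectMatching_coveringGraph {M : (G.coveringGraph Z).Subgraph}
    (hM : M.IsPerfectMatching) : ∃ M' : G.Subgraph, M'.IsMatching ∧ Z ⊆ M'.verts := by
  let M' : G.Subgraph :=
    { verts := {v | ∃ w, M.Adj (.inl v) (.inl w)}
      Adj v w := M.Adj (.inl v) (.inl w)
      adj_sub h := M.adj_sub h
      edge_vert h := ⟨_, h⟩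
      symm := ⟨fun _ _ h => h.symm⟩ }
  refine ⟨M', ?_, fun z hz => ?_⟩
  · rintro v ⟨w, hw⟩
    exact ⟨w, hw, fun w' hw' => Sum.inl_injective (hM.1.eq_of_adj_left hw' hw)⟩
  · obtain ⟨p, hp⟩ := (hM.1 (hM.2 (.inl z))).exists
    cases p with
    | inl w => exact ⟨w, hp⟩
    | inr a => exact absurd (M.adj_sub hp) (by simpa using hz)

lemma ConnectedComponent.supp_subset_of_adj_mem {T : Set V}
    (hT : ∀ ⦃x y⦄, G.Adj x y → x ∈ T → y ∈ T) {v : V} (hv : v ∈ T) :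
    (G.connectedComponentMk v).supp ⊆ T := by
  intro w hw
  obtain ⟨p⟩ := (ConnectedComponent.eq.mp hw).symm
  clear hw
  induction p with
  | nil => exact hv
  | cons h _ ih => exact ih (hT h hv)

lemma ncard_oddComponents_le_card [Finite V] : G.oddComponents.ncard ≤ Nat.card V :=
  (Set.ncard_le_card _).trans
    (Nat.card_le_card_of_surjective G.connectedComponentMk fun c => c.ind fun v => ⟨v, rfl⟩)

lemma _root_.Set.ncard_preimage_inl_add_ncard_preimage_inr {α β : Type*} [Finite α] [Finite β]
    (u : Set (α ⊕ β)) : (Sum.inl ⁻¹' u).ncard + (Sum.inr ⁻¹' u).ncard = u.ncard := by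
  conv_rhs => rw [← Set.image_preimage_inl_union_image_preimage_inr u]
  rw [Set.ncard_union_eq Set.disjoint_image_inl_image_inr,
    Set.ncard_image_of_injective _ Sum.inl_injective,
    Set.ncard_image_of_injective _ Sum.inr_injective]

section DeleteVerts

variable {u : Set (V ⊕ V)}

variable (G Z u) in
def coveringGraphInlHom :
    G.induce (Sum.inl ⁻¹' u)ᶜ →g ((⊤ : (G.coveringGraph Z).Subgraph).deleteVerts u).coe where
  toFun v := ⟨.inl v, Set.mem_univ _, v.2⟩
  map_rel' {v w} h := by simpa using ⟨v.2, w.2, h⟩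

lemma coveringGraphInlHom_injective : Function.Injective (coveringGraphInlHom G Z u) := by
  intro v w h
  simpa [coveringGraphInlHom, Subtype.ext_iff] using h

lemma supp_map_coveringGraphInlHom {c : (G.induce (Sum.inl ⁻¹' u)ᶜ).ConnectedComponent}
    (hc : ∀ v ∈ c.supp, (v : V) ∈ Z) :
    (c.map (coveringGraphInlHom G Z u)).supp = coveringGraphInlHom G Z u '' c.supp := by
  induction c using ConnectedComponent.ind with | h v => ?_
  refine subset_antisymm (ConnectedComponent.supp_subset_of_adj_mem ?_ ⟨v, rfl, rfl⟩) ?_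
  · rintro _ ⟨b | a, hy⟩ hadj ⟨w, hw, rfl⟩
    all_goals simp only [coveringGraphInlHom, RelHom.coeFn_mk, Subgraph.coe_adj,
      Subgraph.deleteVerts_adj, Subgraph.top_adj] at hadj
    · exact ⟨⟨b, hy.2⟩, ConnectedComponent.mem_supp_of_adj_mem_supp _ hw hadj.2.2.2.2, rfl⟩
    · exact absurd (hc w hw) hadj.2.2.2.2
  · rintro _ ⟨w, hw, rfl⟩
    rw [ConnectedComponent.mem_supp_iff] at hw ⊢
    rw [← hw]
    rfl

lemma coveringGraph_connectedComponentMk_eq_of_inr_notMem {a₀ : V} (ha₀ : .inr a₀ ∉ u)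
    (p : ((⊤ : (G.coveringGraph Z).Subgraph).deleteVerts u).verts)
    (hp : ∀ b, p.1 = .inl b → b ∉ Z) :
    ((⊤ : (G.coveringGraph Z).Subgraph).deleteVerts u).coe.connectedComponentMk p =
      ((⊤ : (G.coveringGraph Z).Subgraph).deleteVerts u).coe.connectedComponentMk
        ⟨.inr a₀, Set.mem_univ _, ha₀⟩ := by
  by_cases h : p = ⟨.inr a₀, Set.mem_univ _, ha₀⟩
  · rw [h]
  refine ConnectedComponent.eq.mpr (Adj.reachable ?_)
  obtain ⟨b | a, hp'⟩ := p
  · simpa [hp'.2, ha₀] using hp b rfl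
  · simpa [hp'.2, ha₀] using fun e : a = a₀ => h (by subst e; rfl)

lemma oddComponents_deleteVerts_coveringGraph_subset {a₀ : V} (ha₀ : .inr a₀ ∉ u) :
    ((⊤ : (G.coveringGraph Z).Subgraph).deleteVerts u).coe.oddComponents ⊆
      insert (((⊤ : (G.coveringGraph Z).Subgraph).deleteVerts u).coe.connectedComponentMk
          ⟨.inr a₀, Set.mem_univ _, ha₀⟩)
        (ConnectedComponent.map (coveringGraphInlHom G Z u) ''
          {c ∈ (G.induce (Sum.inl ⁻¹' u)ᶜ).oddComponents | ∀ v ∈ c.supp, (v : V) ∈ Z}) := by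
  intro D hD
  rw [Set.mem_insert_iff, or_iff_not_imp_left]
  intro hDstar
  induction D using ConnectedComponent.ind with | h p => ?_
  obtain ⟨b | a, hp⟩ := p
  swap
  · exact absurd (coveringGraph_connectedComponentMk_eq_of_inr_notMem ha₀ _ (by simp)) hDstar
  set c := (G.induce (Sum.inl ⁻¹' u)ᶜ).connectedComponentMk ⟨b, hp.2⟩
  have hmap : c.map (coveringGraphInlHom G Z u) =
      ((⊤ : (G.coveringGraph Z).Subgraph).deleteVerts u).coe.connectedComponentMk ⟨.inl b, hp⟩ :=
    rfl
  have hcZ : ∀ v ∈ c.supp, (v : V) ∈ Z := by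
    intro v hv
    by_contra hvZ
    refine hDstar ?_
    rw [← hmap, ← (ConnectedComponent.mem_supp_iff _ _).mp hv, ConnectedComponent.map_mk]
    exact coveringGraph_connectedComponentMk_eq_of_inr_notMem ha₀ _
      (by simpa [coveringGraphInlHom] using hvZ)
  refine ⟨c, ⟨?_, hcZ⟩, hmap⟩
  rw [Set.mem_ofPred_eq, ← hmap, supp_map_coveringGraphInlHom hcZ,
    Set.ncard_image_of_injective _ coveringGraphInlHom_injective] at hD
  exact hD

lemma not_isTutteViolator_coveringGraph [Finite V]
    (h : ∀ S : Set V,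
      {c ∈ (G.induce Sᶜ).oddComponents | ∀ v ∈ c.supp, (v : V) ∈ Z}.ncard ≤ S.ncard) :
    ¬ (G.coveringGraph Z).IsTutteViolator u := by
  rw [IsTutteViolator, not_lt]
  set Hu := ((⊤ : (G.coveringGraph Z).Subgraph).deleteVerts u).coe
  have hsplit := u.ncard_preimage_inl_add_ncard_preimage_inr
  have hverts : Nat.card ((⊤ : (G.coveringGraph Z).Subgraph).deleteVerts u).verts + u.ncard =
      2 * Nat.card V := by
    rw [Nat.card_coe_set_eq, Subgraph.deleteVerts_verts, Subgraph.verts_top,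
      Set.ncard_sdiff_add_ncard_of_subset (Set.subset_univ u), Set.ncard_univ, Nat.card_sum]
    ring
  by_cases! hall : ∀ a, .inr a ∈ u
  · have hinr : (Sum.inr ⁻¹' u).ncard = Nat.card V := by
      rw [show Sum.inr ⁻¹' u = Set.univ from Set.eq_univ_of_forall hall, Set.ncard_univ]
    have := ncard_oddComponents_le_card (G := Hu)
    omega
  obtain ⟨a₀, ha₀⟩ := hall
  have hcount : Hu.oddComponents.ncard ≤ (Sum.inl ⁻¹' u).ncard + 1 :=
    calc Hu.oddComponents.ncard
        ≤ (ConnectedComponent.map (coveringGraphInlHom G Z u) ''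
            {c ∈ (G.induce (Sum.inl ⁻¹' u)ᶜ).oddComponents | ∀ v ∈ c.supp, (v : V) ∈ Z}).ncard
          + 1 :=
          (Set.ncard_le_ncard (oddComponents_deleteVerts_coveringGraph_subset ha₀)).trans
            (Set.ncard_insert_le _ _)
      _ ≤ (Sum.inl ⁻¹' u).ncard + 1 := by
          gcongr
          exact (Set.ncard_image_le (Set.toFinite _)).trans (h _)
  -- If `u` misses the right copy, `|u| = |inl ⁻¹' u|` and the parity of `2|V| - |u|`
  -- rules out the `+ 1`.
  have hparity := Nat.odd_iff.symm.trans <| (odd_ncard_oddComponents (G := Hu)).trans Nat.odd_iff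
  omega

end DeleteVerts

theorem exists_isMatching_superset_of_ncard_oddComponents_le [Finite V]
    (h : ∀ S : Set V,
      {c ∈ (G.induce Sᶜ).oddComponents | ∀ v ∈ c.supp, (v : V) ∈ Z}.ncard ≤ S.ncard) :
    ∃ M : G.Subgraph, M.IsMatching ∧ Z ⊆ M.verts :=
  have ⟨_, hM⟩ := tutte.mpr fun _ => not_isTutteViolator_coveringGraph h
  exists_isMatching_of_isPerfectMatching_coveringGraph hM

end SimpleGraph

namespace CLP

universe u

def toSimpleGraph {W : Type*} (E : Set (W × W)) (hsymm : IsSymm E) (hirr : Irrefl E) :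
    SimpleGraph W where
  Adj x y := (x, y) ∈ E
  symm := ⟨hsymm⟩
  loopless := ⟨hirr⟩

section

variable {W : Type*} {E : Set (W × W)}

lemma reach_of_reachable {U : Type*} {G : SimpleGraph U} (g : U → W)
    (hg : ∀ ⦃a b⦄, G.Adj a b → (g a, g b) ∈ E) {a b : U} (h : G.Reachable a b) :
    Reach E (g a) (g b) := by
  obtain ⟨p⟩ := h
  refine ⟨p.length, ?_⟩
  induction p with
  | nil => rfl
  | cons hadj _ ih => exact ⟨_, hg hadj, ih⟩

lemma ncard_edges_singleton_compl (hirr : Irrefl E) (z : W) :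
    (E ∩ {z} ×ˢ {z}ᶜ).ncard = (nbrs E z).ncard := by
  have hstar : E ∩ {z} ×ˢ {z}ᶜ = Prod.mk z '' nbrs E z := by
    ext ⟨x, y⟩
    simp only [Set.mem_inter_iff, Set.mem_prod, Set.mem_singleton_iff, Set.mem_compl_iff,
      Set.mem_image, Prod.mk.injEq, nbrs, Set.mem_ofPred_eq]
    constructor
    · rintro ⟨hxy, rfl, -⟩
      exact ⟨y, hxy, rfl, rfl⟩
    · rintro ⟨y, hy, rfl, rfl⟩
      exact ⟨hy, rfl, fun h => hirr _ (h ▸ hy)⟩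
  rw [hstar, Set.ncard_image_of_injective _ (Prod.mk_right_injective z)]

lemma ncard_edges_into_le [Finite W] {d : ℕ} (hsymm : IsSymm E) (hdeg : MaxDegLE E (d + 1))
    (hexc : ∀ x y : W, d < (nbrs E x).ncard → d < (nbrs E y).ncard → x = y) (S : Set W) :
    (E ∩ Set.univ ×ˢ S).ncard ≤ d * S.ncard + 1 := by
  classical
  have hS := S.toFinite
  have hsub : E ∩ Set.univ ×ˢ S ⊆ ⋃ y ∈ hS.toFinset, (·, y) '' nbrs E y := by
    rintro ⟨x, y⟩ ⟨hxy, -, hy⟩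
    exact Set.mem_biUnion (hS.mem_toFinset.mpr hy) ⟨x, hsymm _ _ hxy, rfl⟩
  have hexc1 : (hS.toFinset.filter fun y => d < (nbrs E y).ncard).card ≤ 1 :=
    Finset.card_le_one.mpr fun x hx y hy =>
      hexc x y (Finset.mem_filter.mp hx).2 (Finset.mem_filter.mp hy).2
  calc (E ∩ Set.univ ×ˢ S).ncard
      ≤ ∑ y ∈ hS.toFinset, ((·, y) '' nbrs E y).ncard :=
        (Set.ncard_le_ncard hsub).trans (Finset.set_ncard_biUnion_le _ _)
    _ ≤ ∑ y ∈ hS.toFinset, (d + if d < (nbrs E y).ncard then 1 else 0) := by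
        gcongr with y
        rw [Set.ncard_image_of_injective _ (Prod.mk_left_injective y)]
        have := (hdeg y).2
        split_ifs <;> omega
    _ = d * S.ncard + (hS.toFinset.filter fun y => d < (nbrs E y).ncard).card := by
        rw [Finset.sum_add_distrib, Finset.sum_boole, Finset.sum_const,
          Set.ncard_eq_toFinset_card _ hS, smul_eq_mul, mul_comm, Nat.cast_id]
    _ ≤ d * S.ncard + 1 := by omega

variable {hsymm : IsSymm E} {hirr : Irrefl E}

lemma reach_of_mem_supp {S : Set W}
    (c : ((toSimpleGraph E hsymm hirr).induce S).ConnectedComponent) {x y : S}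
    (hx : x ∈ c.supp) (hy : y ∈ c.supp) :
    Reach (E ∩ (Subtype.val '' c.supp) ×ˢ (Subtype.val '' c.supp)) x y := by
  refine reach_of_reachable (G := c.toSimpleGraph) (fun v => v.1.1) ?_
    (c.reachable_toSimpleGraph hx hy)
  intro a b h
  exact ⟨h, ⟨a.1, a.2, rfl⟩, b.1, b.2, rfl⟩

lemma edges_compl_supp_subset {S : Set W}
    (c : ((toSimpleGraph E hsymm hirr).induce Sᶜ).ConnectedComponent) :
    E ∩ (Subtype.val '' c.supp) ×ˢ (Subtype.val '' c.supp)ᶜ ⊆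
      E ∩ (Subtype.val '' c.supp) ×ˢ S := by
  rintro ⟨x, y⟩ ⟨hxy, ⟨x', hx', rfl⟩, hy⟩
  refine ⟨hxy, ⟨x', hx', rfl⟩, ?_⟩
  by_contra hyS
  exact hy ⟨⟨y, hyS⟩, c.mem_supp_of_adj_mem_supp hx' hxy, rfl⟩

variable [Finite W] {d : ℕ}

lemma le_ncard_edges_supp
    (hcut : ∀ A : Set W, A ⊆ {z : W | d ≤ (nbrs E z).ncard} → 2 ≤ A.ncard →
      (∀ x ∈ A, ∀ y ∈ A, Reach (E ∩ (A ×ˢ A)) x y) →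
      d ≤ (E ∩ (A ×ˢ Aᶜ)).ncard)
    {S : Set W} (c : ((toSimpleGraph E hsymm hirr).induce Sᶜ).ConnectedComponent)
    (hc : ∀ v ∈ c.supp, (v : W) ∈ {z : W | d ≤ (nbrs E z).ncard}) :
    d ≤ (E ∩ (Subtype.val '' c.supp) ×ˢ S).ncard := by
  refine le_trans ?_ (Set.ncard_le_ncard (edges_compl_supp_subset c))
  obtain ⟨z, hz⟩ | hA := (c.nonempty_supp.image Subtype.val).exists_eq_singleton_or_nontrivial
  · rw [hz, ncard_edges_singleton_compl hirr]
    obtain ⟨v, hv, rfl⟩ := hz.symm ▸ Set.mem_singleton z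
    exact hc v hv
  · refine hcut _ ?_ (Set.one_lt_ncard_iff_nontrivial.mpr hA) ?_
    · rintro _ ⟨v, hv, rfl⟩
      exact hc v hv
    · rintro _ ⟨x, hx, rfl⟩ _ ⟨y, hy, rfl⟩
      exact reach_of_mem_supp c hx hy

lemma ncard_components_subset_high_degree_le (hd : 2 ≤ d) (hdeg : MaxDegLE E (d + 1))
    (hexc : ∀ x y : W, d < (nbrs E x).ncard → d < (nbrs E y).ncard → x = y)
    (hcut : ∀ A : Set W, A ⊆ {z : W | d ≤ (nbrs E z).ncard} → 2 ≤ A.ncard →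
      (∀ x ∈ A, ∀ y ∈ A, Reach (E ∩ (A ×ˢ A)) x y) →
      d ≤ (E ∩ (A ×ˢ Aᶜ)).ncard)
    (S : Set W) :
    {c : ((toSimpleGraph E hsymm hirr).induce Sᶜ).ConnectedComponent |
      ∀ v ∈ c.supp, (v : W) ∈ {z : W | d ≤ (nbrs E z).ncard}}.ncard ≤ S.ncard := by
  set 𝒞 := {c : ((toSimpleGraph E hsymm hirr).induce Sᶜ).ConnectedComponent |
    ∀ v ∈ c.supp, (v : W) ∈ {z : W | d ≤ (nbrs E z).ncard}}
  set X := fun c : ((toSimpleGraph E hsymm hirr).induce Sᶜ).ConnectedComponent =>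
    E ∩ (Subtype.val '' c.supp) ×ˢ S
  have h𝒞 := 𝒞.toFinite
  have hdisj : 𝒞.PairwiseDisjoint X := by
    intro c _ c' _ hcc'
    refine Set.disjoint_left.mpr ?_
    rintro ⟨_, _⟩ ⟨-, ⟨x, hx, rfl⟩, -⟩ ⟨-, ⟨x', hx', hxx'⟩, -⟩
    exact hcc' (SimpleGraph.ConnectedComponent.eq_of_common_vertex hx (Subtype.ext hxx' ▸ hx'))
  have hcount : d * 𝒞.ncard ≤ d * S.ncard + 1 :=
    calc d * 𝒞.ncard = ∑ _c ∈ h𝒞.toFinset, d := by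
          rw [Finset.sum_const, smul_eq_mul, mul_comm, Set.ncard_eq_toFinset_card _ h𝒞]
      _ ≤ ∑ c ∈ h𝒞.toFinset, (X c).ncard :=
          Finset.sum_le_sum fun c hc => le_ncard_edges_supp hcut c (h𝒞.mem_toFinset.mp hc)
      _ = (⋃ c ∈ 𝒞, X c).ncard := by
          rw [h𝒞.ncard_biUnion (fun _ _ => Set.toFinite _) hdisj,
            finsum_mem_eq_finite_toFinset_sum _ h𝒞]
      _ ≤ (E ∩ Set.univ ×ˢ S).ncard :=
          Set.ncard_le_ncard (Set.iUnion₂_subset fun c _ => Set.inter_subset_inter_right _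
            (Set.prod_mono (Set.subset_univ _) le_rfl))
      _ ≤ d * S.ncard + 1 := ncard_edges_into_le hsymm hdeg hexc S
  by_contra! hlt
  have := Nat.mul_le_mul_left d hlt
  rw [Nat.mul_succ] at this
  omega

end

/-- Let `d ≥ 2` and let `G` be a finite graph in which every vertex has
degree at most `d` except at most one vertex of degree `d + 1`. Let `Z` be the set of
vertices of degree at least `d`. If every `A ⊆ Z` with `|A| ≥ 2` spanning a connected
subgraph sends at least `d` edges to its complement, then `G` has a matching covering
every vertex of `Z`. -/
theorem matching_covering_high_degree {W : Type u} (E : Set (W × W)) (d : ℕ)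
    (hd : 2 ≤ d) (hfin : Finite W) (hsymm : IsSymm E) (hirr : Irrefl E)
    (hdeg : MaxDegLE E (d + 1))
    (hexc : ∀ x y : W, d < (nbrs E x).ncard → d < (nbrs E y).ncard → x = y)
    (hcut : ∀ A : Set W, A ⊆ {z : W | d ≤ (nbrs E z).ncard} → 2 ≤ A.ncard →
      (∀ x ∈ A, ∀ y ∈ A, Reach (E ∩ (A ×ˢ A)) x y) →
      d ≤ (E ∩ (A ×ˢ Aᶜ)).ncard) :
    ∃ M : Set (W × W), M ⊆ E ∧ IsMatching M ∧
      {z : W | d ≤ (nbrs E z).ncard} ⊆ coveredVerts M := by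
  obtain ⟨M, hM, hZM⟩ :=
    (toSimpleGraph E hsymm hirr).exists_isMatching_superset_of_ncard_oddComponents_le
      fun S => (Set.ncard_le_ncard fun c hc => hc.2).trans
        (ncard_components_subset_high_degree_le hd hdeg hexc hcut S)
  exact ⟨{q | M.Adj q.1 q.2}, fun _ h => M.adj_sub h,
    ⟨fun _ _ h => h.symm, fun _ _ _ h₁ h₂ => hM.eq_of_adj_left h₁ h₂⟩,
    fun _ hz => (hM (hZM hz)).exists⟩

end CLP
end

section
/- Let d ≥ 2 and let G be a finite bipartite graph in which every vertex has degree at most d, except at most one vertex of degree d + 1. Then G has a matching covering every vertex of degree at least d. -/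
open MeasureTheory Set
open scoped ENNReal

namespace CLP

universe u

variable {V : Type u}

/-!
Call a vertex heavy if its degree is at least `d`. Counting the edges between a set `S` of
heavy vertices and its neighbourhood `N` gives `d * #S ≤ d * #N + 1`, because only one vertex
of `N` can have degree `d + 1`; as `d ≥ 2` this is Hall's condition, so some injection `f`
sends every heavy vertex to a neighbour. It remains to choose a set `S` of heavy vertices with
`S` disjoint from `f '' S` and every heavy vertex in `S ∪ f '' S`: the edges `{x, f x}`,
`x ∈ S`, then form the matching. If some heavy vertex `a` is not the `f`-image of a heavy
vertex, put `a` into `S` and recurse on the heavy vertices other than `a` and `f a`. Otherwise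
the heavy vertices in one side `V₁` of the bipartition will do: a heavy vertex outside `V₁` is
the `f`-image of a heavy vertex, which lies in `V₁` since `f` follows edges.
-/

section HallCondition

open Finset

variable {E : Set (V × V)} {d : ℕ}

theorem sum_le_card_mul_add_one_of_unique_excess {ι : Type*} {s : Finset ι} {g : ι → ℕ}
    (hle : ∀ i ∈ s, g i ≤ d + 1) (huniq : ∀ i ∈ s, ∀ j ∈ s, d < g i → d < g j → i = j) :
    ∑ i ∈ s, g i ≤ #s * d + 1 := by
  classical
  calc ∑ i ∈ s, g i ≤ ∑ i ∈ s, (d + if d < g i then 1 else 0) :=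
        sum_le_sum fun i hi => by have := hle i hi; split_ifs <;> omega
    _ = #s * d + #{i ∈ s | d < g i} := by
        rw [sum_add_distrib, sum_const, smul_eq_mul, sum_boole, Nat.cast_id]
    _ ≤ #s * d + 1 := by
        gcongr
        refine card_le_one.mpr fun i hi j hj => ?_
        rw [mem_filter] at hi hj
        exact huniq i hi.1 j hj.1 hi.2 hj.2

theorem ncard_nbrs_eq_card_filter [Fintype V] [DecidablePred (· ∈ E)] (x : V) :
    (nbrs E x).ncard = #{y | (x, y) ∈ E} := by
  rw [← Set.ncard_coe_finset]
  congr
  ext y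
  simp [nbrs]

theorem card_le_card_nbhd_of_high_degree [Fintype V] [DecidablePred (· ∈ E)]
    (hsymm : IsSymm E) (hd : 2 ≤ d) (hdeg : MaxDegLE E (d + 1))
    (hexc : ∀ x y : V, d < (nbrs E x).ncard → d < (nbrs E y).ncard → x = y)
    {s : Finset V} (hs : ∀ a ∈ s, d ≤ (nbrs E a).ncard) :
    #s ≤ #{b | ∃ a ∈ s, (a, b) ∈ E} := by
  set t : Finset V := {b | ∃ a ∈ s, (a, b) ∈ E}
  let r : V → V → Prop := fun a b => (a, b) ∈ E
  have habove : ∀ a ∈ s, #(t.bipartiteAbove r a) = (nbrs E a).ncard := by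
    intro a ha
    rw [ncard_nbrs_eq_card_filter, bipartiteAbove]
    congr 1
    ext b
    simp only [t, mem_filter]
    exact ⟨fun h => ⟨mem_univ b, h.2⟩, fun h => ⟨⟨mem_univ b, a, ha, h.2⟩, h.2⟩⟩
  have hbelow : ∀ b, #(s.bipartiteBelow r b) ≤ (nbrs E b).ncard := by
    intro b
    rw [ncard_nbrs_eq_card_filter, bipartiteBelow]
    exact card_le_card fun a ha => by
      rw [mem_filter] at ha ⊢
      exact ⟨mem_univ a, hsymm _ _ ha.2⟩
  have hlower : #s * d ≤ ∑ a ∈ s, #(t.bipartiteAbove r a) := by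
    rw [← smul_eq_mul]
    exact card_nsmul_le_sum _ _ _ fun a ha => (habove a ha).symm ▸ hs a ha
  have hupper : ∑ b ∈ t, #(s.bipartiteBelow r b) ≤ #t * d + 1 :=
    sum_le_card_mul_add_one_of_unique_excess (fun b _ => (hbelow b).trans (hdeg b).2)
      fun b _ c _ hb hc => hexc b c (hb.trans_le (hbelow b)) (hc.trans_le (hbelow c))
  rw [sum_card_bipartiteAbove_eq_sum_card_bipartiteBelow] at hlower
  nlinarith

theorem exists_injOn_adjacent_of_high_degree [Finite V] (hsymm : IsSymm E) (hd : 2 ≤ d)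
    (hdeg : MaxDegLE E (d + 1))
    (hexc : ∀ x y : V, d < (nbrs E x).ncard → d < (nbrs E y).ncard → x = y) :
    ∃ f : V → V, InjOn f {a | d ≤ (nbrs E a).ncard} ∧
      ∀ a, d ≤ (nbrs E a).ncard → (a, f a) ∈ E := by
  classical
  have := Fintype.ofFinite V
  set A := {a | d ≤ (nbrs E a).ncard}
  have hall (s : Finset A) : #s ≤ #{b | ∃ a ∈ s, ((a : V), b) ∈ E} :=
    calc #s = #(s.map (Function.Embedding.subtype _)) := (card_map _).symm
      _ ≤ _ := card_le_card_nbhd_of_high_degree hsymm hd hdeg hexc <| by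
        simp only [mem_map]
        exact fun _ ⟨a, _, ha⟩ => ha ▸ a.2
      _ = _ := by congr 1; ext; simp
  obtain ⟨g, hg, hgE⟩ := (Fintype.all_card_le_filter_rel_iff_exists_injective _).mp hall
  refine ⟨fun x => if hx : x ∈ A then g ⟨x, hx⟩ else x, fun x hx y hy hxy => ?_, fun a ha => ?_⟩
  · simp only [dif_pos hx, dif_pos hy] at hxy
    exact congrArg Subtype.val (hg hxy)
  · simpa only [dif_pos (show a ∈ A from ha)] using hgE ⟨a, ha⟩

end HallCondition

theorem exists_subset_disjoint_image_covering [Finite V] (f : V → V) (V₁ A : Set V)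
    (hA : ∀ x ∈ A, x ∈ V₁ ↔ f x ∉ V₁) : ∃ S ⊆ A, Disjoint S (f '' S) ∧ A ⊆ S ∪ f '' S := by
  induction A using WellFoundedLT.induction with
  | ind A ih =>
  by_cases hsrc : ∃ a ∈ A, a ∉ f '' A
  · obtain ⟨a, haA, haf⟩ := hsrc
    have hlt : A \ {a, f a} < A :=
      (ssubset_iff_of_subset sdiff_subset).mpr ⟨a, haA, fun h => h.2 (Or.inl rfl)⟩
    obtain ⟨S, hSA, hdisj, hcov⟩ := ih _ hlt fun x hx => hA x hx.1
    refine ⟨insert a S, insert_subset haA (hSA.trans sdiff_subset), ?_, fun x hx => ?_⟩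
    · rw [image_insert_eq, Set.disjoint_left]
      rintro x (rfl | hxS) (hfx | hfx)
      · exact haf ⟨x, haA, hfx.symm⟩
      · exact haf (image_mono (hSA.trans sdiff_subset) hfx)
      · exact (hSA hxS).2 (Or.inr hfx)
      · exact Set.disjoint_left.mp hdisj hxS hfx
    · by_cases hx' : x = a ∨ x = f a
      · rcases hx' with rfl | rfl
        · exact Or.inl (mem_insert _ _)
        · exact Or.inr (mem_image_of_mem f (mem_insert _ _))
      · rcases hcov ⟨hx, hx'⟩ with hxS | ⟨y, hyS, rfl⟩
        · exact Or.inl (mem_insert_of_mem _ hxS)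
        · exact Or.inr (mem_image_of_mem f (mem_insert_of_mem _ hyS))
  · push Not at hsrc
    refine ⟨{x ∈ A | x ∈ V₁}, fun _ hx => hx.1, ?_, fun x hx => ?_⟩
    · rw [Set.disjoint_left]
      rintro _ ⟨-, hxV⟩ ⟨y, ⟨hyA, hyV⟩, rfl⟩
      exact (hA y hyA).mp hyV hxV
    · by_cases hxV : x ∈ V₁
      · exact Or.inl ⟨hx, hxV⟩
      obtain ⟨y, hyA, rfl⟩ := hsrc x hx
      exact Or.inr ⟨y, ⟨hyA, (hA y hyA).mpr hxV⟩, rfl⟩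

def symmGraphOn (f : V → V) (S : Set V) : Set (V × V) :=
  {p | ∃ x ∈ S, p = (x, f x) ∨ p = (f x, x)}

theorem symmGraphOn_subset {E : Set (V × V)} {f : V → V} {S : Set V} (hE : IsSymm E)
    (hf : ∀ x ∈ S, (x, f x) ∈ E) : symmGraphOn f S ⊆ E := by
  rintro _ ⟨x, hx, rfl | rfl⟩
  exacts [hf x hx, hE _ _ (hf x hx)]

theorem coveredVerts_symmGraphOn (f : V → V) (S : Set V) :
    coveredVerts (symmGraphOn f S) = S ∪ f '' S := by
  ext v
  constructor
  · rintro ⟨w, x, hx, h | h⟩ <;> simp only [Prod.mk.injEq] at h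
    exacts [Or.inl (h.1 ▸ hx), Or.inr ⟨x, hx, h.1.symm⟩]
  · rintro (hv | ⟨x, hx, rfl⟩)
    exacts [⟨f v, v, hv, Or.inl rfl⟩, ⟨x, x, hx, Or.inr rfl⟩]

theorem isMatching_symmGraphOn {f : V → V} {S : Set V} (hf : InjOn f S)
    (hdisj : Disjoint S (f '' S)) : IsMatching (symmGraphOn f S) := by
  refine ⟨?_, ?_⟩
  · rintro _ _ ⟨x, hx, h | h⟩ <;> rw [Prod.mk.injEq] at h <;> rw [h.1, h.2]
    exacts [⟨x, hx, Or.inr rfl⟩, ⟨x, hx, Or.inl rfl⟩]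
  · rintro x y z ⟨a, ha, h | h⟩ ⟨b, hb, h' | h'⟩ <;> rw [Prod.mk.injEq] at h h' <;>
      have hab := h.1.symm.trans h'.1
    · rw [h.2, h'.2, hab]
    · exact (Set.disjoint_left.mp hdisj ha ⟨b, hb, hab.symm⟩).elim
    · exact (Set.disjoint_left.mp hdisj hb ⟨a, ha, hab⟩).elim
    · rw [h.2, h'.2, hf ha hb hab]

theorem matching_covering_high_degree_bipartite_general {W : Type u} (E : Set (W × W)) (d : ℕ)
    (hd : 2 ≤ d) (hfin : Finite W) (hsymm : IsSymm E)
    (hdeg : MaxDegLE E (d + 1))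
    (hexc : ∀ x y : W, d < (nbrs E x).ncard → d < (nbrs E y).ncard → x = y)
    (hbip : ∃ V₁ : Set W, ∀ p ∈ E, (p.1 ∈ V₁ ↔ p.2 ∉ V₁)) :
    ∃ M : Set (W × W), M ⊆ E ∧ IsMatching M ∧
      {z : W | d ≤ (nbrs E z).ncard} ⊆ coveredVerts M := by
  obtain ⟨V₁, hV₁⟩ := hbip
  obtain ⟨f, hf, hfE⟩ := exists_injOn_adjacent_of_high_degree hsymm hd hdeg hexc
  obtain ⟨S, hSA, hdisj, hcov⟩ := exists_subset_disjoint_image_covering f V₁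
    {z | d ≤ (nbrs E z).ncard} fun x hx => hV₁ _ (hfE x hx)
  refine ⟨symmGraphOn f S, symmGraphOn_subset hsymm fun x hx => hfE x (hSA hx),
    isMatching_symmGraphOn (hf.mono hSA) hdisj, ?_⟩
  rwa [coveredVerts_symmGraphOn]

/-- Let `d ≥ 2` and let `G` be a finite bipartite graph in which every
vertex has degree at most `d` except at most one vertex of degree `d + 1`. Then `G` has a
matching covering every vertex of degree at least `d`. -/
theorem matching_covering_high_degree_bipartite {W : Type u} (E : Set (W × W)) (d : ℕ)
    (hd : 2 ≤ d) (hfin : Finite W) (hsymm : IsSymm E) (hirr : Irrefl E)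
    (hdeg : MaxDegLE E (d + 1))
    (hexc : ∀ x y : W, d < (nbrs E x).ncard → d < (nbrs E y).ncard → x = y)
    (hbip : ∃ V₁ : Set W, ∀ p ∈ E, (p.1 ∈ V₁ ↔ p.2 ∉ V₁)) :
    ∃ M : Set (W × W), M ⊆ E ∧ IsMatching M ∧
      {z : W | d ≤ (nbrs E z).ncard} ⊆ coveredVerts M :=
  matching_covering_high_degree_bipartite_general E d hd hfin hsymm hdeg hexc hbip

end CLP
end

section
/- Let (V, 𝓑) be a standard Borel space with probability measure μ, and let E ⊆ V × V be a Borel symmetric irreflexive set of finite maximum degree that is generated, as in the definition of a graphing, by finitely many invertible μ-preserving Borel bijections φ_1, …, φ_k between Borel subsets of V. Then for all Borel sets A, B ⊆ V, ∫_A deg_B(x) dμ(x) = ∫_B deg_A(x) dμ(x), where deg_Y(x) denotes the number of edges from x to the set Y. -/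
open MeasureTheory Set
open scoped ENNReal

namespace CLP

universe u

variable {V : Type u}

/-!
Transport mass along the edges. Split `E ∩ (A × B)` into finitely many disjoint Borel pieces,
each contained in the graph of one of the maps `φᵢ` or of its inverse (first fitting map wins).
On a piece `P` inside the graph of a partial bijection `ψ`, every vertex has at most one
out-neighbour, so `∫_A deg_B` is the sum over the pieces of `μ (fst '' P)`, and `∫_B deg_A` the
sum of `μ (snd '' P)`. These agree because `snd '' P = ψ '' (fst '' P)` and `ψ` preserves `μ`.
The number of `y` with `(x, y) ∈ S` is written `Measure.count (Prod.mk x ⁻¹' S)`, so that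
additivity over the pieces is additivity of a measure.
-/

lemma IsSymm.preimage_swap {E : Set (V × V)} (hE : IsSymm E) : Prod.swap ⁻¹' E = E :=
  Subset.antisymm (fun _ hp => hE _ _ hp) fun _ hp => hE _ _ hp

namespace PartialMPB

section
variable [MeasurableSpace V] {μ : Measure V} (ψ : PartialMPB μ)

def graph : Set (V × V) := {p | p.1 ∈ ψ.Dom ∧ ψ.toFun p.1 = p.2}

lemma measurableSet_graph [MeasurableEq V] : MeasurableSet ψ.graph :=
  (measurable_fst ψ.measDom).inter
    (measurableSet_eq_fun (ψ.meas_toFun.comp measurable_fst) measurable_snd)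

lemma image_invFun_eq {S : Set V} (hS : S ⊆ ψ.Ran) :
    ψ.invFun '' S = ψ.Dom ∩ ψ.toFun ⁻¹' S := by
  ext x
  constructor
  · rintro ⟨y, hy, rfl⟩
    exact ⟨ψ.mapsTo_inv (hS hy), by rwa [mem_preimage, ψ.right_inv y (hS hy)]⟩
  · rintro ⟨hx, hxS⟩
    exact ⟨ψ.toFun x, hxS, ψ.left_inv x hx⟩

lemma measure_image_invFun {S : Set V} (hS : S ⊆ ψ.Ran) (hSm : MeasurableSet S) :
    μ (ψ.invFun '' S) = μ S := by
  have hsub : ψ.invFun '' S ⊆ ψ.Dom := by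
    rw [ψ.image_invFun_eq hS]; exact inter_subset_left
  have hm : MeasurableSet (ψ.invFun '' S) := by
    rw [ψ.image_invFun_eq hS]; exact ψ.measDom.inter (ψ.meas_toFun hSm)
  have hback : ψ.toFun '' (ψ.invFun '' S) = S := by
    rw [image_image]
    exact (image_congr fun y hy => ψ.right_inv y (hS hy)).trans (image_id S)
  rw [← ψ.measure_preserving _ hsub hm, hback]

def symm : PartialMPB μ where
  Dom := ψ.Ran
  Ran := ψ.Dom
  measDom := ψ.measRan
  measRan := ψ.measDom
  toFun := ψ.invFun
  invFun := ψ.toFun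
  meas_toFun := ψ.meas_invFun
  meas_invFun := ψ.meas_toFun
  mapsTo := ψ.mapsTo_inv
  mapsTo_inv := ψ.mapsTo
  left_inv := ψ.right_inv
  right_inv := ψ.left_inv
  measure_preserving := fun _ hS hSm => ψ.measure_image_invFun hS hSm

lemma preimage_swap_graph : Prod.swap ⁻¹' ψ.graph = ψ.symm.graph := by
  ext ⟨x, y⟩
  change (y ∈ ψ.Dom ∧ ψ.toFun y = x) ↔ (x ∈ ψ.Ran ∧ ψ.invFun x = y)
  constructor
  · rintro ⟨hy, rfl⟩
    exact ⟨ψ.mapsTo hy, ψ.left_inv y hy⟩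
  · rintro ⟨hx, rfl⟩
    exact ⟨ψ.mapsTo_inv hx, ψ.right_inv x hx⟩

variable {ψ} {P : Set (V × V)}

lemma image_fst_eq (hP : P ⊆ ψ.graph) :
    Prod.fst '' P = ψ.Dom ∩ (fun x => (x, ψ.toFun x)) ⁻¹' P := by
  ext x
  constructor
  · rintro ⟨⟨x, y⟩, hxy, rfl⟩
    obtain ⟨hx, hy : ψ.toFun x = y⟩ := hP hxy
    exact ⟨hx, hy ▸ hxy⟩
  · rintro ⟨-, hx⟩
    exact ⟨_, hx, rfl⟩

lemma measurableSet_image_fst (hP : P ⊆ ψ.graph) (hPm : MeasurableSet P) :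
    MeasurableSet (Prod.fst '' P) := by
  rw [image_fst_eq hP]
  exact ψ.measDom.inter (hPm.preimage (measurable_id.prodMk ψ.meas_toFun))

lemma image_snd_eq (hP : P ⊆ ψ.graph) : Prod.snd '' P = ψ.toFun '' (Prod.fst '' P) := by
  rw [image_image]
  exact image_congr fun p hp => (hP hp).2.symm

lemma measure_image_snd (hP : P ⊆ ψ.graph) (hPm : MeasurableSet P) :
    μ (Prod.snd '' P) = μ (Prod.fst '' P) := by
  rw [image_snd_eq hP]
  refine ψ.measure_preserving _ ?_ (measurableSet_image_fst hP hPm)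
  rintro _ ⟨p, hp, rfl⟩
  exact (hP hp).1

lemma count_preimage_prodMk [MeasurableSingletonClass V] (hP : P ⊆ ψ.graph) (x : V) :
    Measure.count (Prod.mk x ⁻¹' P) = (Prod.fst '' P).indicator 1 x := by
  by_cases hx : x ∈ Prod.fst '' P
  · obtain ⟨⟨x, y⟩, hxy, rfl⟩ := hx
    have hfiber : Prod.mk x ⁻¹' P = {y} := by
      refine Subset.antisymm (fun z hz => ?_) (singleton_subset_iff.2 hxy)
      have hz' : ψ.toFun x = z := (hP hz).2
      have hy : ψ.toFun x = y := (hP hxy).2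
      exact hz'.symm.trans hy
    rw [hfiber, Measure.count_singleton, indicator_of_mem (mem_image_of_mem _ hxy), Pi.one_apply]
  · have hfiber : Prod.mk x ⁻¹' P = ∅ :=
      eq_empty_of_forall_notMem fun y hy => hx ⟨(x, y), hy, rfl⟩
    rw [hfiber, measure_empty, indicator_of_notMem hx]

end

end PartialMPB

section
variable [MeasurableSpace V] {μ : Measure V}

open PartialMPB Function

lemma lintegral_count_preimage_prodMk_iUnion [MeasurableSingletonClass V] {ι : Type*}
    [Fintype ι] (χ : ι → PartialMPB μ) {P : ι → Set (V × V)} (hPm : ∀ i, MeasurableSet (P i))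
    (hdisj : Pairwise (Disjoint on P)) (hPχ : ∀ i, P i ⊆ (χ i).graph) :
    ∫⁻ x, Measure.count (Prod.mk x ⁻¹' ⋃ i, P i) ∂μ = ∑ i, μ (Prod.fst '' P i) := by
  have hsum : ∀ x, Measure.count (Prod.mk x ⁻¹' ⋃ i, P i) =
      ∑ i, (Prod.fst '' P i).indicator 1 x := by
    intro x
    rw [preimage_iUnion, measure_iUnion (fun i j hij => (hdisj hij).preimage _)
      (fun i => (hPm i).preimage measurable_prodMk_left), tsum_fintype]
    exact Finset.sum_congr rfl fun i _ => count_preimage_prodMk (hPχ i) x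
  simp_rw [hsum]
  rw [lintegral_finsetSum _ fun i _ =>
    measurable_one.indicator (measurableSet_image_fst (hPχ i) (hPm i))]
  refine Finset.sum_congr rfl fun i _ => ?_
  rw [lintegral_indicator_one (measurableSet_image_fst (hPχ i) (hPm i))]

theorem lintegral_count_preimage_prodMk_swap [MeasurableEq V] {ι : Type*} [Fintype ι]
    [LinearOrder ι] [LocallyFiniteOrderBot ι] (ψ : ι → PartialMPB μ) {S : Set (V × V)}
    (hS : MeasurableSet S) (hSψ : S ⊆ ⋃ i, (ψ i).graph) :
    ∫⁻ x, Measure.count (Prod.mk x ⁻¹' (Prod.swap ⁻¹' S)) ∂μ =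
      ∫⁻ x, Measure.count (Prod.mk x ⁻¹' S) ∂μ := by
  set P := disjointed fun i => S ∩ (ψ i).graph with hPdef
  have hPS : ⋃ i, P i = S := by
    rw [iUnion_disjointed, ← inter_iUnion, inter_eq_left.2 hSψ]
  have hPm : ∀ i, MeasurableSet (P i) := fun i => by
    rw [hPdef, disjointed_eq_inter_compl]
    exact (hS.inter (ψ i).measurableSet_graph).inter <| .iInter fun j => .iInter fun _ =>
      (hS.inter (ψ j).measurableSet_graph).compl
  have hPψ : ∀ i, P i ⊆ (ψ i).graph := fun i => (disjointed_subset _ i).trans inter_subset_right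
  have hdisj : Pairwise (Disjoint on P) := disjoint_disjointed _
  have hswap : ∀ i, Prod.swap ⁻¹' P i ⊆ (ψ i).symm.graph := fun i => by
    rw [← preimage_swap_graph]; exact preimage_mono (hPψ i)
  have hfst_swap : ∀ i, Prod.fst '' (Prod.swap ⁻¹' P i) = Prod.snd '' P i := fun i => by
    rw [← image_swap_eq_preimage_swap, image_image]; rfl
  rw [← hPS, preimage_iUnion,
    lintegral_count_preimage_prodMk_iUnion (fun i => (ψ i).symm)
      (fun i => (hPm i).preimage measurable_swap) (fun i j hij => (hdisj hij).preimage _) hswap,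
    lintegral_count_preimage_prodMk_iUnion ψ hPm hdisj hPψ]
  exact Finset.sum_congr rfl fun i _ => by rw [hfst_swap, measure_image_snd (hPψ i) (hPm i)]

lemma Generates.subset_iUnion_graph {k : ℕ} {φ : Fin k → PartialMPB μ} {E : Set (V × V)}
    (hgen : Generates φ E) :
    E ⊆ ⋃ j, ((Fin.append φ fun i => (φ i).symm) j).graph := by
  rintro ⟨x, y⟩ hxy
  obtain ⟨-, i, hi⟩ := (hgen x y).1 hxy
  rw [mem_iUnion]
  rcases hi with hxy | hyx
  · exact ⟨Fin.castAdd k i, by rw [Fin.append_left]; exact hxy⟩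
  · refine ⟨Fin.natAdd k i, ?_⟩
    rw [Fin.append_right, ← PartialMPB.preimage_swap_graph]
    exact hyx

lemma count_preimage_prodMk_inter_prod [MeasurableSingletonClass V]
    {E : Set (V × V)} {A B : Set V} {x : V} (hx : (nbrs E x).Finite) :
    Measure.count (Prod.mk x ⁻¹' (E ∩ A ×ˢ B)) = A.indicator (fun x => (degIn E B x : ℝ≥0∞)) x := by
  rw [preimage_inter]
  by_cases hxA : x ∈ A
  · have hfin : (nbrs E x ∩ B).Finite := hx.inter_of_left B
    rw [mk_preimage_prod_right hxA, indicator_of_mem hxA, degIn,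
      Set.ncard_eq_toFinset_card _ hfin]
    exact Measure.count_apply_finite _ hfin
  · rw [mk_preimage_prod_right_eq_empty hxA, inter_empty, measure_empty, indicator_of_notMem hxA]

lemma setLIntegral_degIn_eq [MeasurableSingletonClass V] {E : Set (V × V)}
    (hE : ∀ x, (nbrs E x).Finite) {A : Set V} (hA : MeasurableSet A) (B : Set V) :
    ∫⁻ x in A, (degIn E B x : ℝ≥0∞) ∂μ = ∫⁻ x, Measure.count (Prod.mk x ⁻¹' (E ∩ A ×ˢ B)) ∂μ := by
  simp_rw [count_preimage_prodMk_inter_prod (hE _)]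
  exact (lintegral_indicator hA _).symm

end

/-- **mass transport.** In a graphing, for all Borel sets `A` and `B`,
`∫_A deg_B dμ = ∫_B deg_A dμ`. -/
theorem lintegral_degIn_symm {V : Type u} [MeasurableSpace V] [StandardBorelSpace V]
    (G : Graphing V) (A B : Set V) (hA : MeasurableSet A) (hB : MeasurableSet B) :
    ∫⁻ x in A, (degIn G.E B x : ℝ≥0∞) ∂G.μ = ∫⁻ x in B, (degIn G.E A x : ℝ≥0∞) ∂G.μ := by
  obtain ⟨k, φ, hgen⟩ := G.gen
  obtain ⟨d, hd⟩ := G.bddDeg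
  have hfin : ∀ x, (nbrs G.E x).Finite := fun x => (hd x).1
  rw [setLIntegral_degIn_eq hfin hA, setLIntegral_degIn_eq hfin hB,
    ← lintegral_count_preimage_prodMk_swap _ (G.measE.inter (hA.prod hB))
      (inter_subset_left.trans hgen.subset_iUnion_graph),
    preimage_inter, G.symm.preimage_swap, preimage_swap_prod]

end CLP
end

section
/- There exists a 2-regular graphing G = (V, 𝓑, E, μ) such that there is no μ-measurable orientation of E in which μ-almost every vertex has out-degree at most 1 and in-degree at most 1. -/
open MeasureTheory Set
open scoped ENNReal

namespace CLP

universe u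

variable {V : Type u}

/-- There is a `2`-regular graphing on `V` admitting no `μ`-measurable orientation in which
almost every vertex has in-degree and out-degree at most `1`.  (A `μ`-measurable orientation
is encoded as a Borel set `F ⊆ E` which, off a `μ`-null set `Z` of vertices, contains exactly
one of `(x, y)`, `(y, x)` for every edge `{x, y}`.) -/
def TwoRegularNoMeasOrientation (V : Type) [MeasurableSpace V] : Prop :=
  ∃ G : Graphing V,
    (∀ x : V, (nbrs G.E x).Finite ∧ (nbrs G.E x).ncard = 2) ∧
    ¬ ∃ (F : Set (V × V)) (Z : Set V),
        MeasurableSet F ∧ F ⊆ G.E ∧ MeasurableSet Z ∧ G.μ Z = 0 ∧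
        (∀ x, x ∉ Z → ∀ y, y ∉ Z → (x, y) ∈ G.E → (((x, y) ∈ F) ↔ ((y, x) ∉ F))) ∧
        G.μ {x : V | 2 ≤ ({y | (x, y) ∈ F}).ncard ∨ 2 ≤ ({y | (y, x) ∈ F}).ncard} = 0

end CLP

/-! The graph on the circle `ℝ/ℤ` (minus a null set) joining `x` to `-x` and to `a - x`, for `a` of
infinite order, is a union of bi-infinite paths `…, x, -x, a + x, -(a + x), 2a + x, …`. An
orientation with in- and out-degrees at most one runs along each path in one direction, so the set
`A` of points whose edge to `-x` points away from them is invariant under the rotation by `a`, while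
negation maps `A` onto its complement. By ergodicity of the rotation `A` is null or conull, but it
has the same measure as its complement. -/

open Function

section Ergodic

variable {α : Type*} {f : α → α} {s : Set α} {g : s → s}

theorem Function.Semiconj.image_val_preimage (hg : Semiconj Subtype.val g f) (hfs : f ⁻¹' s ⊆ s)
    (t : Set s) : Subtype.val '' (g ⁻¹' t) = f ⁻¹' (Subtype.val '' t) := by
  ext x
  constructor
  · rintro ⟨v, hv, rfl⟩
    exact ⟨g v, hv, hg v⟩
  · rintro ⟨w, hw, hwx⟩
    refine ⟨⟨x, hfs (by rw [mem_preimage, ← hwx]; exact w.2)⟩, ?_, rfl⟩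
    rwa [mem_preimage, show g ⟨x, _⟩ = w from Subtype.ext ((hg _).trans hwx.symm)]

variable [MeasurableSpace α] {μ : Measure α}

theorem Ergodic.not_preimage_ae_eq_of_preimage_ae_eq_compl [NeZero μ] {σ : α → α} {A : Set α}
    (hf : Ergodic f μ) (hσ : MeasurePreserving σ μ μ) (hA : NullMeasurableSet A μ)
    (hσA : σ ⁻¹' A =ᵐ[μ] Aᶜ) : ¬f ⁻¹' A =ᵐ[μ] A := by
  intro hfA
  have hcompl : μ Aᶜ = μ A := (measure_congr hσA).symm.trans (hσ.measure_preimage hA)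
  have hnull : μ A = 0 ∧ μ Aᶜ = 0 := by
    rcases hf.quasiErgodic.ae_empty_or_univ₀ hA hfA with h | h
    · rw [ae_eq_empty] at h; exact ⟨h, hcompl ▸ h⟩
    · rw [ae_eq_univ] at h; exact ⟨hcompl ▸ h, h⟩
  apply NeZero.ne μ
  rw [← Measure.measure_univ_eq_zero, ← union_compl_self A]
  exact measure_union_null hnull.1 hnull.2

theorem MeasureTheory.MeasurePreserving.subtype_of_semiconj (hf : MeasurePreserving f μ μ)
    (hs : MeasurableSet s) (hg : Semiconj Subtype.val g f) (hfs : f ⁻¹' s ⊆ s) :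
    MeasurePreserving g (μ.comap Subtype.val) (μ.comap Subtype.val) := by
  have hval := MeasurableEmbedding.subtype_coe hs
  have hgm : Measurable g :=
    hval.measurable_comp_iff.mp (hg.comp_eq ▸ hf.measurable.comp hval.measurable)
  refine ⟨hgm, Measure.ext fun t ht => ?_⟩
  rw [Measure.map_apply hgm ht, comap_subtype_coe_apply hs, comap_subtype_coe_apply hs,
    hg.image_val_preimage hfs]
  exact hf.measure_preimage (hs.subtype_image ht).nullMeasurableSet

theorem PreErgodic.subtype_of_semiconj (hf : PreErgodic f μ) (hs : MeasurableSet s)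
    (hg : Semiconj Subtype.val g f) (hfs : f ⁻¹' s ⊆ s) : PreErgodic g (μ.comap Subtype.val) where
  aeconst_set t ht hgt := by
    have hinv : f ⁻¹' (Subtype.val '' t) = Subtype.val '' t := by
      rw [← hg.image_val_preimage hfs, hgt]
    have hconst := (hf.aeconst_set (hs.subtype_image ht) hinv).anti (ae_restrict_le (s := s))
    rwa [← (measurePreserving_subtype_coe hs).aeconst_preimage
      (hs.subtype_image ht).nullMeasurableSet, Subtype.val_injective.preimage_image] at hconst

theorem Ergodic.subtype_of_semiconj (hf : Ergodic f μ) (hs : MeasurableSet s)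
    (hg : Semiconj Subtype.val g f) (hfs : f ⁻¹' s ⊆ s) : Ergodic g (μ.comap Subtype.val) :=
  ⟨hf.toMeasurePreserving.subtype_of_semiconj hs hg hfs,
    hf.toPreErgodic.subtype_of_semiconj hs hg hfs⟩

end Ergodic

namespace CLP

section Orientation

variable {V : Type*} {E F : Set (V × V)} {a b c d x : V}

def InOutDegLEOne (F : Set (V × V)) (x : V) : Prop :=
  {y | (x, y) ∈ F}.Subsingleton ∧ {y | (y, x) ∈ F}.Subsingleton

theorem inOutDegLEOne_of_not_two_le (hE : IsSymm E) (hx : (nbrs E x).Finite) (hFE : F ⊆ E)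
    (h : ¬(2 ≤ {y | (x, y) ∈ F}.ncard ∨ 2 ≤ {y | (y, x) ∈ F}.ncard)) : InOutDegLEOne F x := by
  have hout : {y | (x, y) ∈ F}.Finite := hx.subset fun _ hy => hFE hy
  have hin : {y | (y, x) ∈ F}.Finite := hx.subset fun _ hy => hE _ _ (hFE hy)
  exact ⟨fun _ hy _ hz => (ncard_le_one_iff hout).mp (by omega) hy hz,
    fun _ hy _ hz => (ncard_le_one_iff hin).mp (by omega) hy hz⟩

theorem mem_of_mem_of_subsingleton_in (hab : (a, b) ∈ F) (hb : {y | (y, b) ∈ F}.Subsingleton)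
    (hac : a ≠ c) (hbc : (b, c) ∈ F ↔ (c, b) ∉ F) : (b, c) ∈ F :=
  hbc.mpr fun hcb => hac (hb hab hcb)

theorem mem_of_mem_of_subsingleton_out (hcd : (c, d) ∈ F) (hc : {y | (c, y) ∈ F}.Subsingleton)
    (hbd : b ≠ d) (hbc : (b, c) ∈ F ↔ (c, b) ∉ F) : (b, c) ∈ F :=
  hbc.mpr fun hcb => hbd (hc hcb hcd)

theorem mem_iff_mem_of_path (hac : a ≠ c) (hbd : b ≠ d) (hb : InOutDegLEOne F b)
    (hc : InOutDegLEOne F c) (hab : (a, b) ∈ F ↔ (b, a) ∉ F) (hbc : (b, c) ∈ F ↔ (c, b) ∉ F)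
    (hcd : (c, d) ∈ F ↔ (d, c) ∉ F) : (a, b) ∈ F ↔ (c, d) ∈ F :=
  ⟨fun h => mem_of_mem_of_subsingleton_in (mem_of_mem_of_subsingleton_in h hb.2 hac hbc) hc.2
      hbd hcd,
    fun h => mem_of_mem_of_subsingleton_out (mem_of_mem_of_subsingleton_out h hc.1 hbd hbc) hb.1
      hac hab⟩

end Orientation

def PartialMPB.ofInvolutive {V : Type*} [MeasurableSpace V] {μ : Measure V} (f : V → V)
    (hf : Involutive f) (hμ : MeasurePreserving f μ μ) : PartialMPB μ where
  Dom := univ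
  Ran := univ
  measDom := MeasurableSet.univ
  measRan := MeasurableSet.univ
  toFun := f
  invFun := f
  meas_toFun := hμ.measurable
  meas_invFun := hμ.measurable
  mapsTo := mapsTo_univ f univ
  mapsTo_inv := mapsTo_univ f univ
  left_inv x _ := hf x
  right_inv x _ := hf x
  measure_preserving S _ hS := by
    rw [hf.image_eq_preimage_symm, hμ.measure_preimage hS.nullMeasurableSet]

structure FreeInvolutionPair {V : Type*} [MeasurableSpace V] (μ : Measure V) where
  σ : V → V
  τ : V → V
  involutive_σ : Involutive σ
  involutive_τ : Involutive τ
  measurePreserving_σ : MeasurePreserving σ μ μ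
  measurePreserving_τ : MeasurePreserving τ μ μ
  σ_ne_self : ∀ x, σ x ≠ x
  τ_ne_self : ∀ x, τ x ≠ x
  σ_ne_τ : ∀ x, σ x ≠ τ x

namespace FreeInvolutionPair

variable {V : Type*} [MeasurableSpace V] {μ : Measure V} (P : FreeInvolutionPair μ)

def edges : Set (V × V) := {p | p.2 = P.σ p.1 ∨ p.2 = P.τ p.1}

theorem mem_edges {x y : V} : (x, y) ∈ P.edges ↔ y = P.σ x ∨ y = P.τ x := Iff.rfl

theorem nbrs_edges (x : V) : nbrs P.edges x = {P.σ x, P.τ x} := rfl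

theorem finite_nbrs_edges (x : V) : (nbrs P.edges x).Finite := by
  rw [nbrs_edges]; exact toFinite _

theorem ncard_nbrs_edges (x : V) : (nbrs P.edges x).ncard = 2 := by
  rw [nbrs_edges, ncard_pair (P.σ_ne_τ x)]

theorem isSymm_edges : IsSymm P.edges := by
  intro x y h
  rcases P.mem_edges.mp h with rfl | rfl
  · exact Or.inl (P.involutive_σ x).symm
  · exact Or.inr (P.involutive_τ x).symm

theorem irrefl_edges : Irrefl P.edges := by
  rintro x (h | h)
  · exact P.σ_ne_self x h.symm
  · exact P.τ_ne_self x h.symm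

theorem measurableSet_edges [MeasurableEq V] : MeasurableSet P.edges :=
  (measurableSet_eq_fun measurable_snd (P.measurePreserving_σ.measurable.comp measurable_fst)).union
    (measurableSet_eq_fun measurable_snd (P.measurePreserving_τ.measurable.comp measurable_fst))

theorem generates_edges :
    Generates ![PartialMPB.ofInvolutive P.σ P.involutive_σ P.measurePreserving_σ,
      PartialMPB.ofInvolutive P.τ P.involutive_τ P.measurePreserving_τ] P.edges := by
  intro x y
  constructor
  · intro h
    refine ⟨fun hxy => P.irrefl_edges x (hxy ▸ h), ?_⟩
    rcases P.mem_edges.mp h with rfl | rfl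
    · exact ⟨0, Or.inl ⟨mem_univ x, rfl⟩⟩
    · exact ⟨1, Or.inl ⟨mem_univ x, rfl⟩⟩
  · rintro ⟨-, i, h⟩
    fin_cases i
    · rcases h with ⟨-, h⟩ | ⟨-, h⟩
      · exact Or.inl h.symm
      · exact P.isSymm_edges y x (Or.inl h.symm)
    · rcases h with ⟨-, h⟩ | ⟨-, h⟩
      · exact Or.inr h.symm
      · exact P.isSymm_edges y x (Or.inr h.symm)

def graphing [MeasurableEq V] [IsProbabilityMeasure μ] : Graphing V where
  μ := μ
  prob := inferInstance
  E := P.edges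
  measE := P.measurableSet_edges
  symm := P.isSymm_edges
  irrefl := P.irrefl_edges
  bddDeg := ⟨2, fun x => ⟨P.finite_nbrs_edges x, (P.ncard_nbrs_edges x).le⟩⟩
  gen := ⟨2, _, P.generates_edges⟩

theorem τ_σ_ne_self (x : V) : P.τ (P.σ x) ≠ x := fun h =>
  P.σ_ne_τ x (by rw [← P.involutive_τ (P.σ x), h])

/-- Along the path `x, σ x, τ σ x, σ τ σ x` the first and last edges are oriented alike, and
`(σ x, x)` is the first edge reversed; so the set of `x` with `(x, σ x) ∈ F` is `τ ∘ σ`-invariant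
and `σ` maps it to its complement. -/
theorem false_of_ae_orientation [NeZero μ] (hT : Ergodic (P.τ ∘ P.σ) μ) {F : Set (V × V)}
    (hF : MeasurableSet F) {U : Set V} (hU : ∀ᵐ x ∂μ, x ∈ U)
    (hexact : ∀ x ∈ U, ∀ y ∈ U, (x, y) ∈ P.edges → ((x, y) ∈ F ↔ (y, x) ∉ F))
    (hdeg : ∀ x ∈ U, InOutDegLEOne F x) : False := by
  have hσ := P.measurePreserving_σ
  set A : Set V := {x | (x, P.σ x) ∈ F}
  have hA : MeasurableSet A := (measurable_id.prodMk hσ.measurable) hF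
  have hgood : ∀ᵐ x ∂μ, x ∈ U ∧ P.σ x ∈ U ∧ P.τ (P.σ x) ∈ U ∧ P.σ (P.τ (P.σ x)) ∈ U :=
    hU.and <| (hσ.quasiMeasurePreserving.ae hU).and <|
      (hT.quasiMeasurePreserving.ae hU).and <|
        (hσ.comp hT.toMeasurePreserving).quasiMeasurePreserving.ae hU
  refine hT.not_preimage_ae_eq_of_preimage_ae_eq_compl hσ hA.nullMeasurableSet ?_ ?_
  · filter_upwards [hgood] with x ⟨hx, hσx, _⟩
    change ((P.σ x, P.σ (P.σ x)) ∈ F) = ((x, P.σ x) ∉ F)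
    rw [P.involutive_σ x]
    exact propext (hexact _ hσx _ hx (Or.inl (P.involutive_σ x).symm))
  · filter_upwards [hgood] with x ⟨hx, hσx, hτσx, hσ_τσx⟩
    refine propext (mem_iff_mem_of_path (P.τ_σ_ne_self x).symm
      (fun h => P.τ_σ_ne_self x (P.involutive_σ.injective h).symm) (hdeg _ hσx) (hdeg _ hτσx)
      (hexact _ hx _ hσx (Or.inl rfl)) (hexact _ hσx _ hτσx (Or.inr rfl))
      (hexact _ hτσx _ hσ_τσx (Or.inl rfl))).symm

theorem twoRegularNoMeasOrientation {V : Type} [MeasurableSpace V] [MeasurableEq V]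
    {μ : Measure V} [IsProbabilityMeasure μ] (P : FreeInvolutionPair μ)
    (hT : Ergodic (P.τ ∘ P.σ) μ) : TwoRegularNoMeasOrientation V := by
  refine ⟨P.graphing, fun x => ⟨P.finite_nbrs_edges x, P.ncard_nbrs_edges x⟩, ?_⟩
  rintro ⟨F, Z, hF, hFE, -, hZ, hexact, hdeg⟩
  refine P.false_of_ae_orientation hT hF
    ((measure_eq_zero_iff_ae_notMem.mp hZ).and (measure_eq_zero_iff_ae_notMem.mp hdeg))
    (fun x hx y hy => hexact x hx.1 y hy.1) fun x hx => ?_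
  exact inOutDegLEOne_of_not_two_le P.isSymm_edges (P.finite_nbrs_edges x) hFE hx.2

end FreeInvolutionPair

section Circle

open AddSubgroup

instance : NullSingletonClass (volume : Measure UnitAddCircle) where
  measure_singleton x := by simpa using AddCircle.volume_closedBall (T := 1) (x := x) 0

variable (a : UnitAddCircle)

def halfZMultiples : Set UnitAddCircle := (fun x => (2 : ℤ) • x) ⁻¹' zmultiples a

theorem measurableSet_halfZMultiples : MeasurableSet (halfZMultiples a) :=
  measurable_const_smul (2 : ℤ) (by rw [coe_zmultiples]; exact (countable_range _).measurableSet)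

theorem volume_halfZMultiples : volume (halfZMultiples a) = 0 := by
  rw [halfZMultiples, (Measure.measurePreserving_zsmul volume two_ne_zero).measure_preimage
    (by rw [coe_zmultiples]; exact (countable_range _).measurableSet.nullMeasurableSet),
    coe_zmultiples]
  exact (countable_range _).measure_zero volume

variable {a}

theorem neg_mem_halfZMultiples_iff {x : UnitAddCircle} :
    -x ∈ halfZMultiples a ↔ x ∈ halfZMultiples a := by
  change (2 : ℤ) • -x ∈ zmultiples a ↔ (2 : ℤ) • x ∈ zmultiples a
  rw [smul_neg, neg_mem_iff]

theorem sub_mem_halfZMultiples_iff {x : UnitAddCircle} :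
    a - x ∈ halfZMultiples a ↔ x ∈ halfZMultiples a := by
  change (2 : ℤ) • (a - x) ∈ zmultiples a ↔ (2 : ℤ) • x ∈ zmultiples a
  rw [smul_sub, sub_eq_add_neg, add_mem_cancel_left (zsmul_mem (mem_zmultiples a) 2), neg_mem_iff]

theorem add_mem_halfZMultiples {x : UnitAddCircle} (hx : x ∈ halfZMultiples a) :
    a + x ∈ halfZMultiples a := by
  change (2 : ℤ) • (a + x) ∈ zmultiples a
  rw [smul_add]
  exact add_mem (zsmul_mem (mem_zmultiples a) 2) hx

theorem neg_ne_self_of_notMem_halfZMultiples {x : UnitAddCircle} (hx : x ∉ halfZMultiples a) :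
    -x ≠ x := fun h =>
  hx (by
    change (2 : ℤ) • x ∈ zmultiples a
    rw [two_zsmul, neg_eq_iff_add_eq_zero.mp h]
    exact zero_mem _)

theorem sub_ne_self_of_notMem_halfZMultiples {x : UnitAddCircle} (hx : x ∉ halfZMultiples a) :
    a - x ≠ x := fun h =>
  hx (by
    change (2 : ℤ) • x ∈ zmultiples a
    rw [two_zsmul, ← sub_eq_iff_eq_add.mp h]
    exact mem_zmultiples a)

variable (a)

/-- Removing the null set of `x` with `2 • x ∈ ℤ • a` makes `x ↦ -x` and `x ↦ a - x`
fixed-point free, and it is invariant under both. -/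
abbrev Vert : Type := ↥(halfZMultiples a)ᶜ

instance : StandardBorelSpace (Vert a) := (measurableSet_halfZMultiples a).compl.standardBorel

noncomputable def vertMeasure : Measure (Vert a) := volume.comap Subtype.val

instance : IsProbabilityMeasure (vertMeasure a) := by
  constructor
  rw [vertMeasure, comap_subtype_coe_apply (measurableSet_halfZMultiples a).compl, image_univ,
    Subtype.range_coe, measure_compl (measurableSet_halfZMultiples a) (measure_ne_top _ _),
    volume_halfZMultiples]
  simp [AddCircle.measure_univ]

def negVert (v : Vert a) : Vert a := ⟨-v, fun h => v.2 (neg_mem_halfZMultiples_iff.mp h)⟩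

def reflectVert (v : Vert a) : Vert a := ⟨a - v, fun h => v.2 (sub_mem_halfZMultiples_iff.mp h)⟩

def involutionPair (ha : a ≠ 0) : FreeInvolutionPair (vertMeasure a) where
  σ := negVert a
  τ := reflectVert a
  involutive_σ _ := Subtype.ext (neg_neg _)
  involutive_τ _ := Subtype.ext (sub_sub_cancel _ _)
  measurePreserving_σ := (Measure.measurePreserving_neg volume).subtype_of_semiconj
    (measurableSet_halfZMultiples a).compl (fun _ => rfl)
    fun _ hx h => hx (neg_mem_halfZMultiples_iff.mpr h)
  measurePreserving_τ := (Measure.measurePreserving_sub_left volume a).subtype_of_semiconj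
    (measurableSet_halfZMultiples a).compl (fun _ => rfl)
    fun _ hx h => hx (sub_mem_halfZMultiples_iff.mpr h)
  σ_ne_self v h := neg_ne_self_of_notMem_halfZMultiples v.2 (congrArg Subtype.val h)
  τ_ne_self v h := sub_ne_self_of_notMem_halfZMultiples v.2 (congrArg Subtype.val h)
  σ_ne_τ _ h := ha (sub_eq_neg_self.mp (congrArg Subtype.val h).symm)

theorem ergodic_reflectVert_comp_negVert (ha : addOrderOf a = 0) :
    Ergodic (reflectVert a ∘ negVert a) (vertMeasure a) :=
  (AddCircle.ergodic_add_left.mpr ha).subtype_of_semiconj (measurableSet_halfZMultiples a).compl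
    (fun _ => sub_neg_eq_add a _) fun _ hx h => hx (add_mem_halfZMultiples h)

theorem twoRegularNoMeasOrientation_vert (ha : addOrderOf a = 0) :
    TwoRegularNoMeasOrientation (Vert a) :=
  (involutionPair a fun h => by simp [h] at ha).twoRegularNoMeasOrientation
    (ergodic_reflectVert_comp_negVert a ha)

end Circle

/-- There exists a `2`-regular graphing with no `μ`-measurable
orientation having almost everywhere in- and out-degree at most `1`. -/
theorem exists_twoRegular_graphing_no_measurable_orientation :
    ∃ (V : Type) (inst : MeasurableSpace V),
      @StandardBorelSpace V inst ∧ @TwoRegularNoMeasOrientation V inst := by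
  have ha : addOrderOf ((√2 : ℝ) : UnitAddCircle) = 0 :=
    AddCircle.denseRange_zsmul_iff.mp
      (AddCircle.denseRange_zsmul_coe_iff.mpr (by simpa using irrational_sqrt_two))
  exact ⟨Vert _, inferInstance, inferInstance, twoRegularNoMeasOrientation_vert _ ha⟩

end CLP
end
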